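/- arXiv:0911.2057 — 8 statements merged into one kernel-verified Lean document; each statement's English description precedes it below -/
import Mathlib

section
/- If P is a finite poset with a unique minimum element and a unique maximum element, then the alternating sum over all chains C in P of (-1)^{length(C)} equals 1, where a chain of length r is a linearly ordered subset x_0 < x_1 < ... < x_r and the empty chain is excluded (chains have at least one element, length = number of elements minus one). -/
open Finset
open scoped Classical

/-- If `P` is a finite poset with a unique minimum element and a unique
maximum element (i.e. an interval), then the alternating sum over all nonempty chains
`C ⊆ P` of `(-1)^{ℓ(C)}`, where `ℓ(C) = |C| - 1`, equals `1`. -/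
theorem chain_alternating_sum_interval (P : Type*) [Fintype P] [PartialOrder P]
    [OrderBot P] [OrderTop P] [DecidableEq P] :
    ∑ C ∈ Finset.univ.powerset.filter
        (fun C : Finset P => C.Nonempty ∧ IsChain (· ≤ ·) (C : Set P)),
      (-1 : ℤ) ^ (C.card - 1) = 1 := by
  set S := Finset.univ.powerset.filter
      (fun C : Finset P => C.Nonempty ∧ IsChain (· ≤ ·) (C : Set P)) with hS
  have htop : ({⊤} : Finset P) ∈ S := by
    simp [hS, Set.subsingleton_singleton.isChain]
  rw [← Finset.sum_erase_add S _ htop]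
  set g : ∀ C : Finset P, C ∈ S.erase {⊤} → Finset P :=
    fun C _ => if ⊤ ∈ C then C.erase ⊤ else insert ⊤ C with hg
  have gmem : ∀ C hC, g C hC ∈ S.erase {⊤} := by
    intro C hC
    have hne := Finset.ne_of_mem_erase hC
    have hmem := Finset.mem_of_mem_erase hC
    simp only [hS, Finset.mem_filter, Finset.mem_powerset] at hmem
    obtain ⟨-, hCne, hchain⟩ := hmem
    by_cases ht : ⊤ ∈ C
    · rw [hg]; dsimp only; rw [if_pos ht]
      refine Finset.mem_erase.2 ⟨?_, ?_⟩
      · intro he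
        apply hne
        apply Finset.Subset.antisymm
        · intro x hx
          rcases eq_or_ne x ⊤ with rfl | hxt
          · simp
          · exfalso
            have hx' : x ∈ C.erase ⊤ := Finset.mem_erase.2 ⟨hxt, hx⟩
            rw [he] at hx'
            exact absurd hx' (Finset.notMem_singleton.2 hxt)
        · exact Finset.singleton_subset_iff.2 ht
      · refine Finset.mem_filter.2 ⟨Finset.mem_powerset.2 (Finset.subset_univ _), ?_, ?_⟩
        · obtain ⟨x, hx, hxt⟩ : ∃ x ∈ C, x ≠ ⊤ := by
            by_contra h
            push_neg at h
            apply hne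
            apply Finset.Subset.antisymm
            · intro x hx
              simp [h x hx]
            · exact Finset.singleton_subset_iff.2 ht
          exact ⟨x, Finset.mem_erase.2 ⟨hxt, hx⟩⟩
        · refine hchain.mono ?_
          intro x hx
          simp only [Finset.coe_erase, Set.mem_diff, Set.mem_singleton_iff] at hx
          exact hx.1
    · rw [hg]; dsimp only; rw [if_neg ht]
      refine Finset.mem_erase.2 ⟨?_, ?_⟩
      · intro he
        obtain ⟨x, hx⟩ := hCne
        have hx' : x ∈ ({⊤} : Finset P) := he ▸ Finset.mem_insert_of_mem hx
        rw [Finset.mem_singleton] at hx'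
        exact ht (hx' ▸ hx)
      · refine Finset.mem_filter.2 ⟨Finset.mem_powerset.2 (Finset.subset_univ _),
          Finset.insert_nonempty _ _, ?_⟩
        rw [Finset.coe_insert]
        exact hchain.insert (fun x _ _ => Or.inr le_top)
  have h1 : ∀ C hC, (-1 : ℤ) ^ (C.card - 1) + (-1) ^ ((g C hC).card - 1) = 0 := by
    intro C hC
    have hne := Finset.ne_of_mem_erase hC
    have hmem := Finset.mem_of_mem_erase hC
    simp only [hS, Finset.mem_filter] at hmem
    obtain ⟨-, hCne, -⟩ := hmem
    by_cases ht : ⊤ ∈ C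
    · rw [hg]; dsimp only; rw [if_pos ht, Finset.card_erase_of_mem ht]
      have h2 : 2 ≤ C.card := by
        obtain ⟨x, hx⟩ := hCne
        rcases eq_or_ne x ⊤ with rfl | hxt
        · by_contra h
          push_neg at h
          have h1 : C.card = 1 := by
            have hc0 : C.card ≠ 0 := by
              simp only [ne_eq, Finset.card_eq_zero]
              rintro rfl; simp at hx
            omega
          rw [Finset.card_eq_one] at h1
          obtain ⟨a, rfl⟩ := h1
          simp only [Finset.mem_singleton] at hx
          exact hne (by rw [hx])
        · exact Finset.one_lt_card.2 ⟨x, hx, ⊤, ht, hxt⟩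
      obtain ⟨k, hk⟩ : ∃ k, C.card = k + 2 := ⟨C.card - 2, by omega⟩
      rw [hk]
      have e1 : k + 2 - 1 = k + 1 := by omega
      rw [e1]
      simp only [Nat.add_sub_cancel, pow_succ]
      ring
    · rw [hg]; dsimp only; rw [if_neg ht, Finset.card_insert_of_notMem ht]
      obtain ⟨k, hk⟩ : ∃ k, C.card = k + 1 :=
        ⟨C.card - 1, by have := Finset.card_pos.2 hCne; omega⟩
      rw [hk]
      simp only [Nat.add_sub_cancel, pow_succ]
      ring
  have h3 : ∀ C hC, (-1 : ℤ) ^ (C.card - 1) ≠ 0 → g C hC ≠ C := by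
    intro C hC _
    by_cases ht : ⊤ ∈ C
    · rw [hg]; dsimp only; rw [if_pos ht]
      intro he
      exact Finset.notMem_erase ⊤ C (by rw [he]; exact ht)
    · rw [hg]; dsimp only; rw [if_neg ht]
      intro he
      exact ht (by rw [← he]; exact Finset.mem_insert_self ⊤ C)
  have h4 : ∀ C hC, g (g C hC) (gmem C hC) = C := by
    intro C hC
    by_cases ht : ⊤ ∈ C
    · simp [hg, ht, Finset.notMem_erase, Finset.insert_erase]
    · simp [hg, ht, Finset.erase_insert]
  rw [Finset.sum_involution g h1 h3 gmem h4]
  norm_num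
end

section
/- Let P be a finite poset partitioned into subposets K_0, ..., K_r such that the partition is monotone (x < y with x ∈ K_i, y ∈ K_j implies i ≤ j) and such that for every nonempty subset I of {0,...,r}, the union of the K_i for i ∈ I has a unique minimum and unique maximum element. Then the sum over all chains C in P that meet every block K_i of (-1)^{ℓ(C)} equals (-1)^r. -/
open Finset
open scoped Classical

lemma aux_cone {P : Type*} [Fintype P] [PartialOrder P] [DecidableEq P]
    (Q : Finset P) (m : P) (hmQ : m ∈ Q) (hmin : ∀ x ∈ Q, m ≤ x) :
    ∑ C ∈ Finset.univ.powerset.filter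
        (fun C : Finset P => (C.Nonempty ∧ IsChain (· ≤ ·) (C : Set P)) ∧ C ⊆ Q),
      (-1 : ℤ) ^ (C.card - 1) = 1 := by
  have hmem : ∀ C : Finset P, C ∈ Finset.univ.powerset.filter
      (fun C : Finset P => (C.Nonempty ∧ IsChain (· ≤ ·) (C : Set P)) ∧ C ⊆ Q) ↔
      (C.Nonempty ∧ IsChain (· ≤ ·) (C : Set P)) ∧ C ⊆ Q := by
    intro C
    simp [Finset.mem_filter]
  set s := Finset.univ.powerset.filter
      (fun C : Finset P => (C.Nonempty ∧ IsChain (· ≤ ·) (C : Set P)) ∧ C ⊆ Q) with hs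
  have hms : ({m} : Finset P) ∈ s := by
    refine (hmem _).mpr ⟨⟨⟨m, Finset.mem_singleton_self m⟩, ?_⟩, Finset.singleton_subset_iff.mpr hmQ⟩
    simp
  rw [← Finset.add_sum_erase _ _ hms]
  have key : ∀ C ∈ s.erase {m},
      (C.Nonempty ∧ IsChain (· ≤ ·) (C : Set P)) ∧ C ⊆ Q ∧ C ≠ {m} := by
    intro C hC
    rcases Finset.mem_erase.mp hC with ⟨hne, hCs⟩
    rcases (hmem _).mp hCs with ⟨⟨h1, h2⟩, h3⟩
    exact ⟨⟨h1, h2⟩, h3, hne⟩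
  have hrest : ∑ C ∈ s.erase {m}, (-1 : ℤ) ^ (C.card - 1) = 0 := by
    set g : ∀ C ∈ s.erase {m}, Finset P :=
      fun C _ => if m ∈ C then C.erase m else insert m C with hg
    have exother : ∀ C ∈ s.erase {m}, m ∈ C → ∃ x ∈ C, x ≠ m := by
      intro C hC hm
      obtain ⟨⟨hCne, _⟩, _, hne⟩ := key C hC
      obtain ⟨x, hx, hxm⟩ := Finset.not_subset.mp
        (fun h => hne (((Finset.subset_singleton_iff.mp h).resolve_left
          (Finset.nonempty_iff_ne_empty.mp hCne))))
      exact ⟨x, hx, fun h => hxm (h ▸ Finset.mem_singleton_self m)⟩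
    have hsign : ∀ C (hC : C ∈ s.erase {m}),
        (-1 : ℤ) ^ (C.card - 1) + (-1) ^ ((g C hC).card - 1) = 0 := by
      intro C hC
      obtain ⟨⟨hCne, _⟩, _, _⟩ := key C hC
      by_cases hm : m ∈ C
      · obtain ⟨x, hx, hxm⟩ := exother C hC hm
        have h2 : 2 ≤ C.card := Finset.one_lt_card.mpr ⟨x, hx, m, hm, hxm⟩
        obtain ⟨d, hd⟩ : ∃ d, C.card = d + 2 := ⟨C.card - 2, by omega⟩
        have e1 : C.card - 1 = d + 1 := by omega
        have e2 : d + 1 - 1 = d := by omega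
        simp only [hg, if_pos hm]
        rw [Finset.card_erase_of_mem hm, e1, e2, pow_succ]
        ring
      · have h1 : 1 ≤ C.card := Finset.card_pos.mpr hCne
        obtain ⟨d, hd⟩ : ∃ d, C.card = d + 1 := ⟨C.card - 1, by omega⟩
        have e1 : C.card - 1 = d := by omega
        have e2 : C.card + 1 - 1 = d + 1 := by omega
        simp only [hg, if_neg hm]
        rw [Finset.card_insert_of_notMem hm, e1, e2, pow_succ]
        ring
    have hne' : ∀ C (hC : C ∈ s.erase {m}), (-1:ℤ) ^ (C.card - 1) ≠ 0 → g C hC ≠ C := by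
      intro C hC _
      by_cases hm : m ∈ C
      · simp only [hg, if_pos hm]
        intro h
        have h2 := congrArg Finset.card h
        have hc1 : 1 ≤ C.card := Finset.card_pos.mpr ⟨m, hm⟩
        rw [Finset.card_erase_of_mem hm] at h2
        omega
      · simp only [hg, if_neg hm]
        intro h
        have h2 := congrArg Finset.card h
        rw [Finset.card_insert_of_notMem hm] at h2
        omega
    have hgmem : ∀ C (hC : C ∈ s.erase {m}), g C hC ∈ s.erase {m} := by
      intro C hC
      obtain ⟨⟨hCne, hch⟩, hCQ, hCnem⟩ := key C hC
      by_cases hm : m ∈ C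
      · simp only [hg, if_pos hm]
        obtain ⟨x, hx, hxm⟩ := exother C hC hm
        refine Finset.mem_erase.mpr ⟨?_, (hmem _).mpr ⟨⟨?_, ?_⟩, ?_⟩⟩
        · intro h
          exact (Finset.notMem_erase m C) (h ▸ Finset.mem_singleton_self m)
        · exact ⟨x, Finset.mem_erase.mpr ⟨hxm, hx⟩⟩
        · exact hch.mono (by exact_mod_cast Finset.coe_subset.mpr (Finset.erase_subset m C))
        · exact (Finset.erase_subset m C).trans hCQ
      · simp only [hg, if_neg hm]
        refine Finset.mem_erase.mpr ⟨?_, (hmem _).mpr ⟨⟨?_, ?_⟩, ?_⟩⟩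
        · intro h
          obtain ⟨x, hx⟩ := hCne
          have : x ∈ ({m} : Finset P) := h ▸ (Finset.mem_insert_of_mem hx)
          exact hm ((Finset.mem_singleton.mp this) ▸ hx)
        · exact ⟨m, Finset.mem_insert_self m C⟩
        · rw [Finset.coe_insert]
          exact hch.insert (fun b hb _ => Or.inl (hmin b (hCQ hb)))
        · exact Finset.insert_subset hmQ hCQ
    have hinv : ∀ C (hC : C ∈ s.erase {m}), g (g C hC) (hgmem C hC) = C := by
      intro C hC
      by_cases hm : m ∈ C
      · simp only [hg, if_pos hm, Finset.notMem_erase, if_neg, if_false]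
        simp [Finset.notMem_erase, Finset.insert_erase hm]
      · simp only [hg, if_neg hm]
        simp [Finset.mem_insert_self, Finset.erase_insert hm]
    exact Finset.sum_involution g hsign hne' hgmem hinv
  rw [hrest]
  simp
lemma aux_sup {ι : Type*} [Fintype ι] [DecidableEq ι] (B : Finset ι) :
    ∑ S ∈ Finset.univ.powerset.filter (fun S => B ⊆ S),
      (-1 : ℤ) ^ (Fintype.card ι - S.card)
      = if B = Finset.univ then 1 else 0 := by
  have hflip : ∀ c : ℕ, c ≤ Fintype.card ι →
      (-1 : ℤ) ^ (Fintype.card ι - c) = (-1) ^ (Fintype.card ι) * (-1) ^ c := by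
    intro c hc
    obtain ⟨d, hd⟩ : ∃ d, Fintype.card ι = c + d := ⟨Fintype.card ι - c, by omega⟩
    have e : Fintype.card ι - c = d := by omega
    have h2 : ((-1 : ℤ)) ^ c * ((-1 : ℤ)) ^ c = 1 := by
      rw [← pow_add, ← two_mul, pow_mul]; norm_num
    rw [e, hd, pow_add]
    calc (-1 : ℤ) ^ d = ((-1 : ℤ) ^ c * (-1 : ℤ) ^ c) * (-1 : ℤ) ^ d := by rw [h2, one_mul]
      _ = (-1 : ℤ) ^ c * (-1 : ℤ) ^ d * (-1 : ℤ) ^ c := by ring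
  rw [Finset.sum_congr rfl (fun S hS => hflip S.card
    (Finset.card_le_card (Finset.mem_powerset.mp (Finset.mem_filter.mp hS).1) |>.trans_eq
      (Finset.card_univ)))]
  rw [← Finset.mul_sum]
  have hre : ∑ S ∈ Finset.univ.powerset.filter (fun S => B ⊆ S), (-1 : ℤ) ^ S.card
      = ∑ T ∈ (Finset.univ \ B).powerset, (-1 : ℤ) ^ (B.card + T.card) := by
    refine Finset.sum_nbij' (fun S => S \ B) (fun T => B ∪ T) ?_ ?_ ?_ ?_ ?_
    · intro S hS
      exact Finset.mem_powerset.mpr (Finset.sdiff_subset_sdiff (Finset.subset_univ S) le_rfl)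
    · intro T hT
      exact Finset.mem_filter.mpr ⟨Finset.mem_powerset.mpr (Finset.subset_univ _),
        Finset.subset_union_left⟩
    · intro S hS
      exact Finset.union_sdiff_of_subset (Finset.mem_filter.mp hS).2
    · intro T hT
      have hdisj : Disjoint T B := (Finset.subset_sdiff.mp (Finset.mem_powerset.mp hT)).2
      exact Finset.union_sdiff_cancel_left hdisj.symm
    · intro S hS
      have hBS := (Finset.mem_filter.mp hS).2
      have : B.card + (S \ B).card = S.card := by
        rw [Finset.card_sdiff_of_subset hBS]
        have := Finset.card_le_card hBS
        omega
      rw [this]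
  rw [hre]
  have : ∑ T ∈ (Finset.univ \ B).powerset, (-1 : ℤ) ^ (B.card + T.card)
      = (-1) ^ B.card * ∑ T ∈ (Finset.univ \ B).powerset, (-1 : ℤ) ^ T.card := by
    rw [Finset.mul_sum]
    exact Finset.sum_congr rfl (fun T _ => by rw [pow_add])
  rw [this, Finset.sum_powerset_neg_one_pow_card]
  by_cases hB : B = Finset.univ
  · subst hB
    simp [Finset.sdiff_self, ← pow_add, ← two_mul, pow_mul, Finset.card_univ]
  · have : (Finset.univ \ B) ≠ ∅ := by
      intro h
      exact hB (Finset.eq_univ_of_forall (fun x => by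
        by_contra hx
        have : x ∈ Finset.univ \ B := Finset.mem_sdiff.mpr ⟨Finset.mem_univ x, hx⟩
        simp [h] at this))
    simp [this, hB]


/-- Let `P` be a finite poset partitioned into subposets `K 0, …, K r`
such that the partition is monotone (`x < y` with `x ∈ K i`, `y ∈ K j` implies `i ≤ j`)
and such that for every nonempty index set `I ⊆ {0,…,r}` the union `⋃_{i ∈ I} K i` has a
unique minimum and a unique maximum element.  Then the alternating sum over all chains
`C` in `P` meeting every block `K i` of `(-1)^{ℓ(C)}` equals `(-1)^r`. -/
theorem chain_alternating_sum_monotone_partition (P : Type*) [Fintype P] [PartialOrder P]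
    [DecidableEq P] (r : ℕ) (K : Fin (r + 1) → Finset P)
    (hpart : ∀ x : P, ∃! i, x ∈ K i)
    (hmono : ∀ x y : P, ∀ i j : Fin (r + 1), x ∈ K i → y ∈ K j → x < y → i ≤ j)
    (hint : ∀ I : Finset (Fin (r + 1)), I.Nonempty →
      (∃ m ∈ I.biUnion K, ∀ x ∈ I.biUnion K, m ≤ x) ∧
      (∃ M ∈ I.biUnion K, ∀ x ∈ I.biUnion K, x ≤ M)) :
    ∑ C ∈ Finset.univ.powerset.filter
        (fun C : Finset P => C.Nonempty ∧ IsChain (· ≤ ·) (C : Set P) ∧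
          ∀ i : Fin (r + 1), (C ∩ K i).Nonempty),
      (-1 : ℤ) ^ (C.card - 1) = (-1) ^ r := by
  classical
  set Ch : Finset (Finset P) := Finset.univ.powerset.filter
      (fun C : Finset P => C.Nonempty ∧ IsChain (· ≤ ·) (C : Set P)) with hCh
  set Bl : Finset P → Finset (Fin (r + 1)) :=
      fun C => Finset.univ.filter (fun i => (C ∩ K i).Nonempty) with hBl
  -- C ⊆ biUnion S K ↔ Bl C ⊆ S
  have hsubiff : ∀ (C : Finset P) (S : Finset (Fin (r + 1))),
      C ⊆ S.biUnion K ↔ Bl C ⊆ S := by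
    intro C S
    constructor
    · intro h i hi
      have hi' : (C ∩ K i).Nonempty := (Finset.mem_filter.mp hi).2
      obtain ⟨x, hx⟩ := hi' 
      rw [Finset.mem_inter] at hx
      obtain ⟨j, hj, hxj⟩ := Finset.mem_biUnion.mp (h hx.1)
      obtain ⟨i₀, hi₀, huniq⟩ := hpart x
      rw [huniq i hx.2, ← huniq j hxj]
      exact hj
    · intro h x hx
      obtain ⟨i, hi, -⟩ := hpart x
      refine Finset.mem_biUnion.mpr ⟨i, h ?_, hi⟩
      exact Finset.mem_filter.mpr ⟨Finset.mem_univ i, ⟨x, Finset.mem_inter.mpr ⟨hx, hi⟩⟩⟩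
  -- f S = 1 for nonempty S
  have hfilter_eq : ∀ S : Finset (Fin (r + 1)),
      Ch.filter (fun C => C ⊆ S.biUnion K) = Finset.univ.powerset.filter
        (fun C : Finset P => (C.Nonempty ∧ IsChain (· ≤ ·) (C : Set P)) ∧ C ⊆ S.biUnion K) := by
    intro S
    rw [hCh, Finset.filter_filter]
  have hf1 : ∀ S : Finset (Fin (r + 1)), S.Nonempty →
      ∑ C ∈ Ch.filter (fun C => C ⊆ S.biUnion K), (-1 : ℤ) ^ (C.card - 1) = 1 := by
    intro S hS
    obtain ⟨m, hm, hmin⟩ := (hint S hS).1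
    rw [hfilter_eq]
    exact aux_cone _ m hm hmin
  have hf0 : ∑ C ∈ Ch.filter (fun C => C ⊆ (∅ : Finset (Fin (r + 1))).biUnion K),
      (-1 : ℤ) ^ (C.card - 1) = 0 := by
    apply Finset.sum_eq_zero
    intro C hC
    rw [Finset.mem_filter, hCh, Finset.mem_filter] at hC
    obtain ⟨⟨-, hne, -⟩, hsub⟩ := hC
    exfalso
    obtain ⟨x, hx⟩ := hne
    have := hsub hx
    simp at this
  -- the double sum
  have swap : ∑ S ∈ (Finset.univ : Finset (Fin (r + 1))).powerset,
      (-1 : ℤ) ^ (r + 1 - S.card) *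
        ∑ C ∈ Ch.filter (fun C => C ⊆ S.biUnion K), (-1 : ℤ) ^ (C.card - 1)
      = ∑ C ∈ Ch, (-1 : ℤ) ^ (C.card - 1) * (if Bl C = Finset.univ then 1 else 0) := by
    have step1 : ∀ S ∈ (Finset.univ : Finset (Fin (r + 1))).powerset,
        (-1 : ℤ) ^ (r + 1 - S.card) *
          ∑ C ∈ Ch.filter (fun C => C ⊆ S.biUnion K), (-1 : ℤ) ^ (C.card - 1)
        = ∑ C ∈ Ch, (if Bl C ⊆ S then (-1 : ℤ) ^ (r + 1 - S.card) * (-1) ^ (C.card - 1) else 0) := by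
      intro S _
      rw [Finset.mul_sum, Finset.sum_filter]
      refine Finset.sum_congr rfl (fun C _ => if_congr (hsubiff C S) rfl rfl)
    rw [Finset.sum_congr rfl step1, Finset.sum_comm]
    refine Finset.sum_congr rfl (fun C _ => ?_)
    have : ∑ S ∈ (Finset.univ : Finset (Fin (r + 1))).powerset,
        (if Bl C ⊆ S then (-1 : ℤ) ^ (r + 1 - S.card) * (-1) ^ (C.card - 1) else 0)
        = (-1 : ℤ) ^ (C.card - 1) *
          ∑ S ∈ (Finset.univ : Finset (Fin (r + 1))).powerset.filter (fun S => Bl C ⊆ S),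
            (-1 : ℤ) ^ (r + 1 - S.card) := by
      rw [Finset.mul_sum, ← Finset.sum_filter]
      exact Finset.sum_congr rfl (fun S _ => by ring)
    rw [this]
    have hsup := aux_sup (Bl C)
    rw [Fintype.card_fin] at hsup
    rw [hsup]
  -- evaluate RHS of swap as the goal sum
  have target_eq : ∑ C ∈ Ch, (-1 : ℤ) ^ (C.card - 1) * (if Bl C = Finset.univ then 1 else 0)
      = ∑ C ∈ Finset.univ.powerset.filter
          (fun C : Finset P => C.Nonempty ∧ IsChain (· ≤ ·) (C : Set P) ∧
            ∀ i : Fin (r + 1), (C ∩ K i).Nonempty),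
        (-1 : ℤ) ^ (C.card - 1) := by
    have h1 : ∀ C : Finset P, (Bl C = Finset.univ) ↔ ∀ i : Fin (r + 1), (C ∩ K i).Nonempty := by
      intro C
      simp only [hBl, Finset.eq_univ_iff_forall, Finset.mem_filter, Finset.mem_univ, true_and]
    have h2 : ∑ C ∈ Ch, (-1 : ℤ) ^ (C.card - 1) * (if Bl C = Finset.univ then 1 else 0)
        = ∑ C ∈ Ch.filter (fun C => Bl C = Finset.univ), (-1 : ℤ) ^ (C.card - 1) := by
      rw [Finset.sum_filter (fun C => Bl C = Finset.univ) (fun C : Finset P => (-1 : ℤ) ^ (C.card - 1))]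
      refine Finset.sum_congr rfl (fun C _ => ?_)
      by_cases h : Bl C = Finset.univ <;> simp [h]
    rw [h2]
    apply Finset.sum_congr
    · rw [hCh, Finset.filter_filter]
      apply Finset.filter_congr
      intro C _
      rw [and_assoc]
      constructor
      · rintro ⟨a, b, c⟩; exact ⟨a, b, (h1 C).mp c⟩
      · rintro ⟨a, b, c⟩; exact ⟨a, b, (h1 C).mpr c⟩
    · intro C _; rfl
  -- evaluate LHS of swap explicitly
  have eval : ∑ S ∈ (Finset.univ : Finset (Fin (r + 1))).powerset,
      (-1 : ℤ) ^ (r + 1 - S.card) *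
        ∑ C ∈ Ch.filter (fun C => C ⊆ S.biUnion K), (-1 : ℤ) ^ (C.card - 1)
      = (-1 : ℤ) ^ r := by
    have step : ∀ S ∈ (Finset.univ : Finset (Fin (r + 1))).powerset,
        (-1 : ℤ) ^ (r + 1 - S.card) *
          ∑ C ∈ Ch.filter (fun C => C ⊆ S.biUnion K), (-1 : ℤ) ^ (C.card - 1)
        = (-1 : ℤ) ^ (r + 1 - S.card) - (if S = ∅ then (-1 : ℤ) ^ (r + 1 - S.card) else 0) := by
      intro S _
      by_cases hS : S = ∅
      · subst hS
        rw [hf0, if_pos rfl]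
        ring
      · rw [hf1 S (Finset.nonempty_iff_ne_empty.mpr hS), if_neg hS]
        ring
    rw [Finset.sum_congr rfl step, Finset.sum_sub_distrib]
    have e1 : ∑ S ∈ (Finset.univ : Finset (Fin (r + 1))).powerset,
        (-1 : ℤ) ^ (r + 1 - S.card) = 0 := by
      have : (Finset.univ : Finset (Fin (r + 1))).powerset
          = (Finset.univ : Finset (Fin (r + 1))).powerset.filter (fun S => (∅ : Finset (Fin (r+1))) ⊆ S) := by
        rw [Finset.filter_true_of_mem]
        intro S _
        exact Finset.empty_subset S
      rw [this]
      have hsup := aux_sup (∅ : Finset (Fin (r + 1)))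
      rw [Fintype.card_fin] at hsup
      rw [hsup, if_neg]
      intro h
      have : (0 : Fin (r + 1)) ∈ (∅ : Finset (Fin (r + 1))) := h ▸ Finset.mem_univ 0
      simp at this
    have e2 : ∑ S ∈ (Finset.univ : Finset (Fin (r + 1))).powerset,
        (if S = ∅ then (-1 : ℤ) ^ (r + 1 - S.card) else 0) = (-1 : ℤ) ^ (r + 1) := by
      rw [Finset.sum_ite_eq' (Finset.univ : Finset (Fin (r + 1))).powerset
        (∅ : Finset (Fin (r + 1))) (fun S => (-1 : ℤ) ^ (r + 1 - S.card))]
      rw [if_pos (Finset.mem_powerset.mpr (Finset.empty_subset _))]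
      simp
    rw [e1, e2, pow_succ]
    ring
  rw [← target_eq, ← swap, eval]
end

section
/- Let f : P → Q be a surjective order-preserving map from a finite lattice P to a finite poset Q such that every fiber f^{-1}(q) is an interval of P, and suppose f admits an order-preserving section g : Q → P with f ∘ g = id. Then for all x, y ∈ Q, the Möbius function satisfies μ_Q(x,y) = Σ_{a ∈ f^{-1}(x), b ∈ f^{-1}(y)} μ_P(a,b). -/
open Finset Function IncidenceAlgebra
open scoped Classical

/-- The Möbius function is invariant under order isomorphisms. -/
private lemma mu_orderIso {α β : Type*} [PartialOrder α] [LocallyFiniteOrder α] [DecidableEq α]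
    [PartialOrder β] [LocallyFiniteOrder β] [DecidableEq β] (e : α ≃o β) (x y : α) :
    mu ℤ (e x) (e y) = mu ℤ x y := by
  suffices H : ∀ n : ℕ, ∀ y : α, (Icc x y).card = n → mu ℤ (e x) (e y) = mu ℤ x y by
    exact H _ y rfl
  intro n
  induction n using Nat.strong_induction_on with
  | _ n ih =>
    intro y hn
    by_cases hxy : x = y
    · subst hxy; simp
    · have hexy : (e x) ≠ e y := fun h => hxy (e.injective h)
      rw [mu_eq_neg_sum_Ico_of_ne hexy, mu_eq_neg_sum_Ico_of_ne hxy, neg_inj]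
      refine Finset.sum_nbij' (fun z => e.symm z) (fun z => e z) ?_ ?_ ?_ ?_ ?_
      · intro a ha
        rw [mem_Ico] at ha ⊢
        constructor
        · have := e.symm.monotone ha.1; simpa using this
        · have := e.symm.strictMono ha.2; simpa using this
      · intro a ha
        rw [mem_Ico] at ha ⊢
        exact ⟨by simpa using e.monotone ha.1, by simpa using e.strictMono ha.2⟩
      · intro a _; simp
      · intro a _; simp
      · intro a ha
        rw [mem_Ico] at ha
        have hlt : (Icc x (e.symm a)).card < n := by
          rw [← hn]
          have h1 : x ≤ e.symm a := by simpa using e.symm.monotone ha.1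
          have h2 : e.symm a < e.symm (e y) := e.symm.strictMono ha.2
          rw [e.symm_apply_apply] at h2
          exact Finset.card_lt_card (Finset.Icc_ssubset_Icc_right (h1.trans h2.le) le_rfl h2)
        have := ih _ hlt (e.symm a) rfl
        rw [e.apply_symm_apply] at this
        exact this

/-- Reindex a sum with a `dite` over fixed points of `k` as a sum over the subtype of
fixed points. -/
private lemma sum_fixed {α : Type*} [Fintype α] [DecidableEq α] (k : α → α) (p : α → Prop)
    [DecidablePred p] (F : {x : α // k x = x} → ℤ) :
    ∑ a ∈ univ.filter p, (if h : k a = a then F ⟨a, h⟩ else 0)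
      = ∑ a ∈ univ.filter (fun a : {x : α // k x = x} => p ↑a), F a := by
  classical
  rw [← Finset.sum_filter_of_ne (p := fun a => k a = a)
    (fun a _ h => by by_contra hk; rw [dif_neg hk] at h; exact h rfl)]
  refine Finset.sum_bij' (fun a ha => (⟨a, (Finset.mem_filter.1 ha).2⟩ : {x : α // k x = x}))
    (fun a' _ => (a' : α)) ?_ ?_ ?_ ?_ ?_
  · intro a ha
    simp only [Finset.mem_filter, Finset.mem_univ, true_and] at ha ⊢
    exact ha.1
  · intro a' ha'
    simp only [Finset.mem_filter, Finset.mem_univ, true_and] at ha' ⊢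
    exact ⟨ha', a'.2⟩
  · intro a _; rfl
  · intro a' _; rfl
  · intro a ha
    rw [dif_pos (Finset.mem_filter.1 ha).2]

/-- **Rota's closure theorem.**  If `k` is a closure operator on a finite poset `α`, then for
any `a : α` and any closed `c`, the sum of `μ(a, b)` over the `k`-fiber of `c` equals
`μ(a, c)` computed in the subposet of closed elements when `a` is closed, and `0` otherwise. -/
private lemma rota {α : Type*} [Fintype α] [PartialOrder α] [DecidableEq α]
    [LocallyFiniteOrder α] (k : α → α)
    [LocallyFiniteOrder {x : α // k x = x}]
    (hmono : Monotone k) (hle : ∀ a, a ≤ k a) (hidem : ∀ a, k (k a) = k a)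
    (a : α) (c : {x : α // k x = x}) :
    ∑ b ∈ univ.filter (fun b => k b = ↑c), mu ℤ a b
      = if h : k a = a then mu ℤ (⟨a, h⟩ : {x : α // k x = x}) c else 0 := by
  set l : {x : α // k x = x} := ⟨k a, hidem a⟩ with hl
  suffices H : ∀ n : ℕ, ∀ c : {x : α // k x = x}, (Icc l c).card = n →
      ∑ b ∈ univ.filter (fun b => k b = ↑c), mu ℤ a b
        = if h : k a = a then mu ℤ (⟨a, h⟩ : {x : α // k x = x}) c else 0 by
    exact H _ c rfl
  intro n
  induction n using Nat.strong_induction_on with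
  | _ n ih =>
    intro c hn
    by_cases hlc : l ≤ c
    · have claim1 : ∑ c' ∈ Icc l c, (∑ b ∈ univ.filter (fun b => k b = (c' : α)), mu ℤ a b)
          = if a = (c : α) then 1 else 0 := by
        have hmaps : ∀ b ∈ univ.filter (fun b : α => k a ≤ k b ∧ k b ≤ (c : α)),
            (⟨k b, hidem b⟩ : {x : α // k x = x}) ∈ Icc l c := by
          intro b hb
          rw [Finset.mem_filter] at hb
          rw [Finset.mem_Icc]
          exact ⟨Subtype.mk_le_mk.2 hb.2.1, Subtype.mk_le_mk.2 hb.2.2⟩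
        calc ∑ c' ∈ Icc l c, (∑ b ∈ univ.filter (fun b => k b = (c' : α)), mu ℤ a b)
            = ∑ c' ∈ Icc l c,
                ∑ b ∈ (univ.filter (fun b : α => k a ≤ k b ∧ k b ≤ (c : α))).filter
                  (fun b => (⟨k b, hidem b⟩ : {x : α // k x = x}) = c'), mu ℤ a b := by
              refine Finset.sum_congr rfl fun c' hc' => ?_
              rw [Finset.mem_Icc] at hc'
              congr 1
              ext b
              simp only [Finset.mem_filter, Finset.mem_univ, true_and, Subtype.ext_iff]
              constructor
              · intro h
                refine ⟨⟨?_, ?_⟩, h⟩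
                · rw [h]; exact hc'.1
                · rw [h]; exact hc'.2
              · exact fun h => h.2
          _ = ∑ b ∈ univ.filter (fun b : α => k a ≤ k b ∧ k b ≤ (c : α)), mu ℤ a b :=
              Finset.sum_fiberwise_of_maps_to hmaps _
          _ = ∑ b ∈ Icc a (c : α), mu ℤ a b := by
              refine (Finset.sum_subset ?_ ?_).symm
              · intro b hb
                rw [Finset.mem_Icc] at hb
                rw [Finset.mem_filter]
                refine ⟨Finset.mem_univ _, hmono hb.1, ?_⟩
                calc k b ≤ k (c : α) := hmono hb.2
                  _ = (c : α) := c.2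
              · intro b hb hnb
                rw [Finset.mem_filter] at hb
                refine apply_eq_zero_of_not_le (fun hab => hnb ?_) _
                rw [Finset.mem_Icc]
                exact ⟨hab, (hle b).trans hb.2.2⟩
          _ = if a = (c : α) then 1 else 0 := sum_Icc_mu_right _ _
      have claim2 : ∑ c' ∈ Icc l c,
          (if h : k a = a then mu ℤ (⟨a, h⟩ : {x : α // k x = x}) c' else 0)
          = if a = (c : α) then 1 else 0 := by
        by_cases h : k a = a
        · simp only [dif_pos h]
          have hla : l = ⟨a, h⟩ := Subtype.ext h
          rw [← hla, sum_Icc_mu_right]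
          have hiff : l = c ↔ a = (c : α) := by
            rw [hla]; exact Subtype.ext_iff
          simp only [hiff]
        · simp only [dif_neg h, Finset.sum_const_zero]
          rw [if_neg]
          intro hac
          exact h (by rw [hac]; exact c.2)
      have hc : c ∈ Icc l c := Finset.mem_Icc.2 ⟨hlc, le_refl _⟩
      rw [← Finset.sum_erase_add _ _ hc] at claim1 claim2
      have herase : ∑ c' ∈ (Icc l c).erase c,
          (∑ b ∈ univ.filter (fun b => k b = (c' : α)), mu ℤ a b)
            = ∑ c' ∈ (Icc l c).erase c,
          (if h : k a = a then mu ℤ (⟨a, h⟩ : {x : α // k x = x}) c' else 0) := by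
        refine Finset.sum_congr rfl fun c' hc' => ?_
        rw [Finset.mem_erase, Finset.mem_Icc] at hc'
        have hlt : (Icc l c').card < n := by
          rw [← hn]
          refine Finset.card_lt_card (Finset.Icc_ssubset_Icc_right (hc'.2.1.trans hc'.2.2)
            le_rfl ?_)
          exact lt_of_le_of_ne hc'.2.2 hc'.1
        exact ih _ hlt c' rfl
      rw [herase] at claim1
      exact add_left_cancel (claim1.trans claim2.symm)
    · have hz : ∑ b ∈ univ.filter (fun b => k b = (c : α)), mu ℤ a b = 0 := by
        refine Finset.sum_eq_zero fun b hb => ?_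
        rw [Finset.mem_filter] at hb
        refine apply_eq_zero_of_not_le (fun hab => hlc ?_) _
        refine Subtype.mk_le_mk.2 ?_
        calc k a ≤ k b := hmono hab
          _ = (c : α) := hb.2
      rw [hz]
      by_cases h : k a = a
      · rw [dif_pos h]
        refine (apply_eq_zero_of_not_le (fun hac => hlc ?_) _).symm
        have : l = ⟨a, h⟩ := Subtype.ext h
        rw [this]
        exact hac
      · rw [dif_neg h]

/-- Dual version of Rota's closure theorem, for coclosure (kernel) operators. -/
private lemma corota {α : Type*} [Fintype α] [PartialOrder α] [DecidableEq α]
    [LocallyFiniteOrder α] (k : α → α)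
    [LocallyFiniteOrder {x : α // k x = x}]
    (hmono : Monotone k) (hle : ∀ a, k a ≤ a) (hidem : ∀ a, k (k a) = k a)
    (c : α) (d : {x : α // k x = x}) :
    ∑ b ∈ univ.filter (fun b => k b = ↑d), mu ℤ b c
      = if h : k c = c then mu ℤ d (⟨c, h⟩ : {x : α // k x = x}) else 0 := by
  set l : {x : α // k x = x} := ⟨k c, hidem c⟩ with hl
  suffices H : ∀ n : ℕ, ∀ d : {x : α // k x = x}, (Icc d l).card = n →
      ∑ b ∈ univ.filter (fun b => k b = ↑d), mu ℤ b c
        = if h : k c = c then mu ℤ d (⟨c, h⟩ : {x : α // k x = x}) else 0 by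
    exact H _ d rfl
  intro n
  induction n using Nat.strong_induction_on with
  | _ n ih =>
    intro d hn
    by_cases hdl : d ≤ l
    · have claim1 : ∑ d' ∈ Icc d l, (∑ b ∈ univ.filter (fun b => k b = (d' : α)), mu ℤ b c)
          = if (d : α) = c then 1 else 0 := by
        have hmaps : ∀ b ∈ univ.filter (fun b : α => (d : α) ≤ k b ∧ k b ≤ k c),
            (⟨k b, hidem b⟩ : {x : α // k x = x}) ∈ Icc d l := by
          intro b hb
          rw [Finset.mem_filter] at hb
          rw [Finset.mem_Icc]
          exact ⟨Subtype.mk_le_mk.2 hb.2.1, Subtype.mk_le_mk.2 hb.2.2⟩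
        calc ∑ d' ∈ Icc d l, (∑ b ∈ univ.filter (fun b => k b = (d' : α)), mu ℤ b c)
            = ∑ d' ∈ Icc d l,
                ∑ b ∈ (univ.filter (fun b : α => (d : α) ≤ k b ∧ k b ≤ k c)).filter
                  (fun b => (⟨k b, hidem b⟩ : {x : α // k x = x}) = d'), mu ℤ b c := by
              refine Finset.sum_congr rfl fun d' hd' => ?_
              rw [Finset.mem_Icc] at hd'
              congr 1
              ext b
              simp only [Finset.mem_filter, Finset.mem_univ, true_and, Subtype.ext_iff]
              constructor
              · intro h
                refine ⟨⟨?_, ?_⟩, h⟩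
                · rw [h]; exact hd'.1
                · rw [h]; exact hd'.2
              · exact fun h => h.2
          _ = ∑ b ∈ univ.filter (fun b : α => (d : α) ≤ k b ∧ k b ≤ k c), mu ℤ b c :=
              Finset.sum_fiberwise_of_maps_to hmaps _
          _ = ∑ b ∈ Icc (d : α) c, mu ℤ b c := by
              refine (Finset.sum_subset ?_ ?_).symm
              · intro b hb
                rw [Finset.mem_Icc] at hb
                rw [Finset.mem_filter]
                refine ⟨Finset.mem_univ _, ?_, hmono hb.2⟩
                calc (d : α) = k (d : α) := d.2.symm
                  _ ≤ k b := hmono hb.1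
              · intro b hb hnb
                rw [Finset.mem_filter] at hb
                refine apply_eq_zero_of_not_le (fun hbc => hnb ?_) _
                rw [Finset.mem_Icc]
                exact ⟨hb.2.1.trans (hle b), hbc⟩
          _ = if (d : α) = c then 1 else 0 := sum_Icc_mu_left _ _
      have claim2 : ∑ d' ∈ Icc d l,
          (if h : k c = c then mu ℤ d' (⟨c, h⟩ : {x : α // k x = x}) else 0)
          = if (d : α) = c then 1 else 0 := by
        by_cases h : k c = c
        · simp only [dif_pos h]
          have hlc : l = ⟨c, h⟩ := Subtype.ext h
          rw [← hlc, sum_Icc_mu_left]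
          have hiff : d = l ↔ (d : α) = c := by
            rw [hlc]; exact Subtype.ext_iff
          simp only [hiff]
        · simp only [dif_neg h, Finset.sum_const_zero]
          rw [if_neg]
          intro hdc
          exact h (by rw [← hdc]; exact d.2)
      have hd : d ∈ Icc d l := Finset.mem_Icc.2 ⟨le_refl _, hdl⟩
      rw [← Finset.sum_erase_add _ _ hd] at claim1 claim2
      have herase : ∑ d' ∈ (Icc d l).erase d,
          (∑ b ∈ univ.filter (fun b => k b = (d' : α)), mu ℤ b c)
            = ∑ d' ∈ (Icc d l).erase d,
          (if h : k c = c then mu ℤ d' (⟨c, h⟩ : {x : α // k x = x}) else 0) := by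
        refine Finset.sum_congr rfl fun d' hd' => ?_
        rw [Finset.mem_erase, Finset.mem_Icc] at hd'
        have hlt : (Icc d' l).card < n := by
          rw [← hn]
          refine Finset.card_lt_card (Finset.Icc_ssubset_Icc_left
            (hd'.2.1.trans hd'.2.2) (lt_of_le_of_ne hd'.2.1 (Ne.symm hd'.1)) le_rfl)
        exact ih _ hlt d' rfl
      rw [herase] at claim1
      exact add_left_cancel (claim1.trans claim2.symm)
    · have hz : ∑ b ∈ univ.filter (fun b => k b = (d : α)), mu ℤ b c = 0 := by
        refine Finset.sum_eq_zero fun b hb => ?_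
        rw [Finset.mem_filter] at hb
        refine apply_eq_zero_of_not_le (fun hbc => hdl ?_) _
        refine Subtype.mk_le_mk.2 ?_
        calc (d : α) = k b := hb.2.symm
          _ ≤ k c := hmono hbc
      rw [hz]
      by_cases h : k c = c
      · rw [dif_pos h]
        refine (apply_eq_zero_of_not_le (fun hdc => hdl ?_) _).symm
        have : l = ⟨c, h⟩ := Subtype.ext h
        rw [this]
        exact hdc
      · rw [dif_neg h]

/-- Push a double Möbius sum through a closure operator. -/
private lemma closure_step {α : Type*} [Fintype α] [PartialOrder α] [DecidableEq α]
    [LocallyFiniteOrder α] (k : α → α)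
    [LocallyFiniteOrder {x : α // k x = x}]
    (hmono : Monotone k) (hle : ∀ a, a ≤ k a) (hidem : ∀ a, k (k a) = k a)
    (p q : α → Prop) [DecidablePred p] [DecidablePred q] (hq : ∀ b, q (k b) ↔ q b) :
    ∑ a ∈ univ.filter p, ∑ b ∈ univ.filter q, mu ℤ a b
      = ∑ a ∈ univ.filter (fun a : {x : α // k x = x} => p ↑a),
          ∑ b ∈ univ.filter (fun b : {x : α // k x = x} => q ↑b), mu ℤ a b := by
  classical
  have step1 : ∀ a : α, ∑ b ∈ univ.filter q, mu ℤ a b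
      = ∑ c ∈ univ.filter (fun c : {x : α // k x = x} => q ↑c),
          (if h : k a = a then mu ℤ (⟨a, h⟩ : {x : α // k x = x}) c else 0) := by
    intro a
    have hmaps : ∀ b ∈ univ.filter q,
        (⟨k b, hidem b⟩ : {x : α // k x = x}) ∈
          univ.filter (fun c : {x : α // k x = x} => q ↑c) := by
      intro b hb
      rw [Finset.mem_filter] at hb ⊢
      exact ⟨Finset.mem_univ _, (hq b).2 hb.2⟩
    rw [← Finset.sum_fiberwise_of_maps_to hmaps (fun b => mu ℤ a b)]
    refine Finset.sum_congr rfl fun c hc => ?_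
    rw [Finset.mem_filter] at hc
    rw [← rota k hmono hle hidem a c]
    congr 1
    ext b
    simp only [Finset.mem_filter, Finset.mem_univ, true_and, Subtype.ext_iff]
    constructor
    · exact fun h => h.2
    · intro h
      refine ⟨?_, h⟩
      rw [← hq b, h]
      exact hc.2
  calc ∑ a ∈ univ.filter p, ∑ b ∈ univ.filter q, mu ℤ a b
      = ∑ a ∈ univ.filter p, ∑ c ∈ univ.filter (fun c : {x : α // k x = x} => q ↑c),
          (if h : k a = a then mu ℤ (⟨a, h⟩ : {x : α // k x = x}) c else 0) :=
        Finset.sum_congr rfl fun a _ => step1 a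
    _ = ∑ c ∈ univ.filter (fun c : {x : α // k x = x} => q ↑c), ∑ a ∈ univ.filter p,
          (if h : k a = a then mu ℤ (⟨a, h⟩ : {x : α // k x = x}) c else 0) :=
        Finset.sum_comm
    _ = ∑ c ∈ univ.filter (fun c : {x : α // k x = x} => q ↑c),
          ∑ a ∈ univ.filter (fun a : {x : α // k x = x} => p ↑a), mu ℤ a c :=
        Finset.sum_congr rfl fun c _ => sum_fixed k p (fun z => mu ℤ z c)
    _ = _ := Finset.sum_comm

/-- Push a double Möbius sum through a coclosure operator. -/
private lemma coclosure_step {α : Type*} [Fintype α] [PartialOrder α] [DecidableEq α]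
    [LocallyFiniteOrder α] (k : α → α)
    [LocallyFiniteOrder {x : α // k x = x}]
    (hmono : Monotone k) (hle : ∀ a, k a ≤ a) (hidem : ∀ a, k (k a) = k a)
    (p q : α → Prop) [DecidablePred p] [DecidablePred q] (hp : ∀ a, p (k a) ↔ p a) :
    ∑ a ∈ univ.filter p, ∑ b ∈ univ.filter q, mu ℤ a b
      = ∑ a ∈ univ.filter (fun a : {x : α // k x = x} => p ↑a),
          ∑ b ∈ univ.filter (fun b : {x : α // k x = x} => q ↑b), mu ℤ a b := by
  classical
  have step1 : ∀ c : α, ∑ a ∈ univ.filter p, mu ℤ a c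
      = ∑ d ∈ univ.filter (fun d : {x : α // k x = x} => p ↑d),
          (if h : k c = c then mu ℤ d (⟨c, h⟩ : {x : α // k x = x}) else 0) := by
    intro c
    have hmaps : ∀ a ∈ univ.filter p,
        (⟨k a, hidem a⟩ : {x : α // k x = x}) ∈
          univ.filter (fun d : {x : α // k x = x} => p ↑d) := by
      intro a ha
      rw [Finset.mem_filter] at ha ⊢
      exact ⟨Finset.mem_univ _, (hp a).2 ha.2⟩
    rw [← Finset.sum_fiberwise_of_maps_to hmaps (fun a => mu ℤ a c)]
    refine Finset.sum_congr rfl fun d hd => ?_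
    rw [Finset.mem_filter] at hd
    rw [← corota k hmono hle hidem c d]
    congr 1
    ext a
    simp only [Finset.mem_filter, Finset.mem_univ, true_and, Subtype.ext_iff]
    constructor
    · exact fun h => h.2
    · intro h
      refine ⟨?_, h⟩
      rw [← hp a, h]
      exact hd.2
  calc ∑ a ∈ univ.filter p, ∑ b ∈ univ.filter q, mu ℤ a b
      = ∑ b ∈ univ.filter q, ∑ a ∈ univ.filter p, mu ℤ a b := Finset.sum_comm
    _ = ∑ b ∈ univ.filter q, ∑ d ∈ univ.filter (fun d : {x : α // k x = x} => p ↑d),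
          (if h : k b = b then mu ℤ d (⟨b, h⟩ : {x : α // k x = x}) else 0) :=
        Finset.sum_congr rfl fun b _ => step1 b
    _ = ∑ d ∈ univ.filter (fun d : {x : α // k x = x} => p ↑d), ∑ b ∈ univ.filter q,
          (if h : k b = b then mu ℤ d (⟨b, h⟩ : {x : α // k x = x}) else 0) :=
        Finset.sum_comm
    _ = _ :=
        Finset.sum_congr rfl fun d _ => sum_fixed k q (fun z => mu ℤ d z)

/-- Let `f : P → Q` be a surjective order-preserving map from a finite
lattice `P` to a finite poset `Q` whose fibers are intervals, admitting an
order-preserving section `g` (an *interval retract*).  Then for all `x, y ∈ Q`,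
`μ_Q(x,y) = ∑_{f a = x} ∑_{f b = y} μ_P(a,b)`. -/
theorem moebius_of_interval_retract {P Q : Type*}
    [Fintype P] [Lattice P] [LocallyFiniteOrder P] [DecidableEq P]
    [Fintype Q] [PartialOrder Q] [LocallyFiniteOrder Q] [DecidableEq Q]
    (f : P → Q) (hf : Monotone f) (hsurj : Surjective f)
    (hfib : ∀ q : Q, ∃ a b : P, f ⁻¹' {q} = Set.Icc a b)
    (g : Q → P) (hg : Monotone g) (hsec : ∀ q : Q, f (g q) = q) :
    ∀ x y : Q,
      (mu ℤ x y : ℤ) =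
        ∑ a ∈ Finset.univ.filter (fun a : P => f a = x),
          ∑ b ∈ Finset.univ.filter (fun b : P => f b = y), mu ℤ a b := by
  intro x y
  -- the closure operator `k b = b ⊔ g (f b)` on `P`
  set k : P → P := fun b => b ⊔ g (f b) with hkdef
  have hfk : ∀ b, f (k b) = f b := by
    intro b
    obtain ⟨u, v, huv⟩ := hfib (f b)
    have hb : b ∈ f ⁻¹' {f b} := by simp
    have hgb : g (f b) ∈ f ⁻¹' {f b} := by simp [hsec]
    rw [huv, Set.mem_Icc] at hb hgb
    have hkb : k b ∈ f ⁻¹' {f b} := by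
      rw [huv, Set.mem_Icc]
      exact ⟨hb.1.trans le_sup_left, sup_le hb.2 hgb.2⟩
    simpa using hkb
  have hkmono : Monotone k := fun b b' h => sup_le_sup h (hg (hf h))
  have hkle : ∀ b, b ≤ k b := fun b => le_sup_left
  have hkidem : ∀ b, k (k b) = k b := by
    intro b
    show k b ⊔ g (f (k b)) = k b
    rw [hfk b]
    exact sup_eq_left.2 le_sup_right
  letI instC : LocallyFiniteOrder {b : P // k b = b} := Fintype.toLocallyFiniteOrder
  have h1 := closure_step k hkmono hkle hkidem
    (fun a : P => f a = x) (fun b : P => f b = y)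
    (fun b => by show f (k b) = y ↔ f b = y; rw [hfk b])
  -- the coclosure operator on the closed elements
  have hfk2 : ∀ c : {b : P // k b = b}, f ((c : P) ⊓ g (f (c : P))) = f (c : P) := by
    intro c
    obtain ⟨u, v, huv⟩ := hfib (f (c : P))
    have hb : (c : P) ∈ f ⁻¹' {f (c : P)} := by simp
    have hgb : g (f (c : P)) ∈ f ⁻¹' {f (c : P)} := by simp [hsec]
    rw [huv, Set.mem_Icc] at hb hgb
    have hm : (c : P) ⊓ g (f (c : P)) ∈ f ⁻¹' {f (c : P)} := by
      rw [huv, Set.mem_Icc]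
      exact ⟨le_inf hb.1 hgb.1, inf_le_left.trans hb.2⟩
    simpa using hm
  have hgfle : ∀ c : {b : P // k b = b}, g (f (c : P)) ≤ (c : P) := fun c => sup_eq_left.1 c.2
  have hcfix : ∀ c : {b : P // k b = b}, k ((c : P) ⊓ g (f (c : P))) = (c : P) ⊓ g (f (c : P)) := by
    intro c
    show ((c : P) ⊓ g (f (c : P))) ⊔ g (f ((c : P) ⊓ g (f (c : P)))) = _
    rw [hfk2 c]
    exact sup_eq_left.2 (le_inf (hgfle c) le_rfl)
  set k' : {b : P // k b = b} → {b : P // k b = b} :=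
    fun c => ⟨(c : P) ⊓ g (f (c : P)), hcfix c⟩ with hk'def
  have hfk' : ∀ c, f ((k' c : {b : P // k b = b}) : P) = f (c : P) := fun c => hfk2 c
  have hk'mono : Monotone k' := by
    intro c c' h
    exact Subtype.mk_le_mk.2 (inf_le_inf h (hg (hf h)))
  have hk'le : ∀ c, k' c ≤ c := fun c => Subtype.mk_le_mk.2 inf_le_left
  have hk'idem : ∀ c, k' (k' c) = k' c := by
    intro c
    refine Subtype.ext ?_
    show ((k' c : {b : P // k b = b}) : P) ⊓ g (f ((k' c : {b : P // k b = b}) : P)) = _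
    rw [hfk' c]
    exact inf_eq_left.2 inf_le_right
  letI instD : LocallyFiniteOrder {c : {b : P // k b = b} // k' c = c} :=
    Fintype.toLocallyFiniteOrder
  have h2 := coclosure_step k' hk'mono hk'le hk'idem
    (fun c : {b : P // k b = b} => f (c : P) = x) (fun c : {b : P // k b = b} => f (c : P) = y)
    (fun c => by show f ((k' c : {b : P // k b = b}) : P) = x ↔ f (c : P) = x; rw [hfk' c])
  -- the doubly-fixed elements are exactly the image of `g`
  have hgfixk : ∀ q : Q, k (g q) = g q := by
    intro q
    show g q ⊔ g (f (g q)) = g q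
    rw [hsec q, sup_idem]
  have hgfixk' : ∀ q : Q, k' ⟨g q, hgfixk q⟩ = ⟨g q, hgfixk q⟩ := by
    intro q
    refine Subtype.ext ?_
    show g q ⊓ g (f (g q)) = g q
    rw [hsec q, inf_idem]
  set e : Q → {c : {b : P // k b = b} // k' c = c} :=
    fun q => ⟨⟨g q, hgfixk q⟩, hgfixk' q⟩ with hedef
  have hD : ∀ d : {c : {b : P // k b = b} // k' c = c}, ((d : {b : P // k b = b}) : P)
      = g (f ((d : {b : P // k b = b}) : P)) := by
    intro d
    have h1' : g (f ((d : {b : P // k b = b}) : P)) ≤ ((d : {b : P // k b = b}) : P) :=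
      hgfle d.1
    have h2' : ((d : {b : P // k b = b}) : P) ≤ g (f ((d : {b : P // k b = b}) : P)) := by
      have := congrArg (fun z : {b : P // k b = b} => (z : P)) d.2
      exact inf_eq_left.1 this
    exact le_antisymm h2' h1'
  have hsingle : ∀ q : Q,
      univ.filter (fun d : {c : {b : P // k b = b} // k' c = c}
        => f ((d : {b : P // k b = b}) : P) = q) = {e q} := by
    intro q
    ext d
    simp only [Finset.mem_filter, Finset.mem_univ, true_and, Finset.mem_singleton]
    constructor
    · intro hfd
      refine Subtype.ext (Subtype.ext ?_)
      show ((d : {b : P // k b = b}) : P) = g q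
      rw [hD d, hfd]
    · intro h
      rw [h]
      exact hsec q
  -- the order isomorphism `Q ≃o D`
  have hemono : ∀ q q' : Q, e q ≤ e q' ↔ q ≤ q' := by
    intro q q'
    constructor
    · intro h
      have : g q ≤ g q' := h
      calc q = f (g q) := (hsec q).symm
        _ ≤ f (g q') := hf this
        _ = q' := hsec q'
    · intro h
      exact Subtype.mk_le_mk.2 (Subtype.mk_le_mk.2 (hg h))
  let eIso : Q ≃o {c : {b : P // k b = b} // k' c = c} :=
    { toFun := e
      invFun := fun d => f ((d : {b : P // k b = b}) : P)
      left_inv := fun q => hsec q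
      right_inv := fun d => Subtype.ext (Subtype.ext (by
        show g (f ((d : {b : P // k b = b}) : P)) = ((d : {b : P // k b = b}) : P)
        exact (hD d).symm))
      map_rel_iff' := by
        intro q q'
        exact hemono q q' }
  have hmu : mu ℤ (e x) (e y) = mu ℤ x y := mu_orderIso eIso x y
  refine Eq.symm (h1.trans (h2.trans ?_))
  rw [hsingle x, hsingle y, Finset.sum_singleton, Finset.sum_singleton]
  exact hmu
end

section
/- For a Galois connection between finite posets P and Q given by order-preserving maps f : P → Q and g : Q → P with f(p) ≤ q ⟺ p ≤ g(q), we have for all p ∈ P and q ∈ Q: Σ_{y : f(y) = q} μ_P(p, y) = Σ_{x : g(x) = p} μ_Q(x, q), where μ_P and μ_Q are the Möbius functions of P and Q. -/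
open Finset Function IncidenceAlgebra
open scoped Classical

private lemma rota_delta_left {α : Type*} [PartialOrder α] [LocallyFiniteOrder α]
    [DecidableEq α] (a b : α) :
    ∑ x ∈ Finset.Icc a b, (mu ℤ x b : ℤ) = if a = b then 1 else 0 := by
  have h : (zeta ℤ * mu ℤ : IncidenceAlgebra ℤ α) a b = (1 : IncidenceAlgebra ℤ α) a b := by
    rw [zeta_mul_mu]
  simp only [mul_apply, one_apply] at h
  rw [← h]
  refine Finset.sum_congr rfl fun x hx => ?_
  simp [zeta_apply, (Finset.mem_Icc.1 hx).1]

private lemma rota_delta_right {α : Type*} [PartialOrder α] [LocallyFiniteOrder α]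
    [DecidableEq α] (a b : α) :
    ∑ x ∈ Finset.Icc a b, (mu ℤ a x : ℤ) = if a = b then 1 else 0 := by
  have h : (mu ℤ * zeta ℤ : IncidenceAlgebra ℤ α) a b = (1 : IncidenceAlgebra ℤ α) a b := by
    rw [mu_mul_zeta]
  simp only [mul_apply, one_apply] at h
  rw [← h]
  refine Finset.sum_congr rfl fun x hx => ?_
  simp [zeta_apply, (Finset.mem_Icc.1 hx).2]

/-- Rota's formula.  For a Galois connection `f : P → Q`, `g : Q → P`
between finite posets (order-preserving maps with `f p ≤ q ↔ p ≤ g q`), we have for all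
`p ∈ P` and `q ∈ Q`:
`∑_{y : f y = q} μ_P(p, y) = ∑_{x : g x = p} μ_Q(x, q)`. -/
theorem rota_galois_connection_moebius {P Q : Type*}
    [Fintype P] [PartialOrder P] [LocallyFiniteOrder P] [DecidableEq P]
    [Fintype Q] [PartialOrder Q] [LocallyFiniteOrder Q] [DecidableEq Q]
    (f : P → Q) (g : Q → P) (hf : Monotone f) (hg : Monotone g)
    (hgc : GaloisConnection f g) :
    ∀ (p : P) (q : Q),
      ∑ y ∈ Finset.univ.filter (fun y : P => f y = q), (mu ℤ p y : ℤ) =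
        ∑ x ∈ Finset.univ.filter (fun x : Q => g x = p), mu ℤ x q := by
  intro p q
  calc
    ∑ y ∈ Finset.univ.filter (fun y : P => f y = q), (mu ℤ p y : ℤ)
        = ∑ y : P, ∑ x : Q,
            (if f y ≤ x ∧ x ≤ q then (mu ℤ p y : ℤ) * mu ℤ x q else 0) := by
      rw [Finset.sum_filter]
      refine Finset.sum_congr rfl fun y _ => ?_
      have hIcc : ∑ x : Q, (if f y ≤ x ∧ x ≤ q then (mu ℤ p y : ℤ) * mu ℤ x q else 0)
          = ∑ x ∈ Finset.Icc (f y) q, (mu ℤ p y : ℤ) * mu ℤ x q := by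
        rw [← Finset.sum_filter]
        congr 1
        ext x
        simp [Finset.mem_Icc]
      rw [hIcc, ← Finset.mul_sum]
      by_cases h : f y ≤ q
      · rw [rota_delta_left (f y) q]
        by_cases he : f y = q <;> simp [he]
      · have he : f y ≠ q := fun e => h (e ▸ le_rfl)
        rw [Finset.Icc_eq_empty h]
        simp [he]
    _ = ∑ x : Q, ∑ y : P,
            (if f y ≤ x ∧ x ≤ q then (mu ℤ p y : ℤ) * mu ℤ x q else 0) :=
      Finset.sum_comm
    _ = ∑ x ∈ Finset.univ.filter (fun x : Q => g x = p), mu ℤ x q := by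
      rw [Finset.sum_filter]
      refine Finset.sum_congr rfl fun x _ => ?_
      by_cases hxq : x ≤ q
      · have step : ∑ y : P, (if f y ≤ x ∧ x ≤ q then (mu ℤ p y : ℤ) * mu ℤ x q else 0)
            = ∑ y : P, (if p ≤ y ∧ y ≤ g x then (mu ℤ p y : ℤ) * mu ℤ x q else 0) := by
          refine Finset.sum_congr rfl fun y _ => ?_
          by_cases h2 : p ≤ y
          · simp [hgc y x, hxq, h2]
          · rw [apply_eq_zero_of_not_le h2 (mu ℤ), zero_mul]
            simp
        rw [step, ← Finset.sum_filter]
        have : Finset.univ.filter (fun y : P => p ≤ y ∧ y ≤ g x) = Finset.Icc p (g x) := by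
          ext y; simp [Finset.mem_Icc]
        rw [this, ← Finset.sum_mul, rota_delta_right p (g x)]
        by_cases he : g x = p
        · simp [he]
        · have : p ≠ g x := fun e => he e.symm
          simp [he, this]
      · have h0 : ∀ y : P, (if f y ≤ x ∧ x ≤ q then (mu ℤ p y : ℤ) * mu ℤ x q else 0) = 0 := by
          intro y; simp [hxq]
        rw [Finset.sum_congr rfl fun y _ => h0 y, Finset.sum_const, smul_zero,
          apply_eq_zero_of_not_le hxq (mu ℤ)]
        simp
end

section
/- The number A_n of bi-leveled trees on n nodes satisfies the recurrence A_0 = 1 and, for n ≥ 1, A_n = C_{n-1} + Σ_{i=1}^{n-1} A_i · A_{n-i}, where C_k is the k-th Catalan number. -/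
/-- Planar binary trees. -/
inductive PBTree : Type
  | leaf : PBTree
  | node : PBTree → PBTree → PBTree
  deriving DecidableEq, Repr

namespace PBTree

instance : Inhabited PBTree := ⟨leaf⟩

/-- Number of internal nodes. -/
def size : PBTree → ℕ
  | leaf => 0
  | node l r => l.size + r.size + 1

/-- Number of leaves. -/
def nleaves : PBTree → ℕ
  | leaf => 1
  | node l r => l.nleaves + r.nleaves

end PBTree

/-- Planar binary trees with `Bool`-labelled internal nodes; a label `true` means the
node belongs to the distinguished upper order ideal.  Bi-leveled trees are the labelled
trees satisfying `isBL` below. -/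
inductive LTree : Type
  | leaf : LTree
  | node : LTree → Bool → LTree → LTree
  deriving DecidableEq, Repr

namespace LTree

instance : Inhabited LTree := ⟨leaf⟩

def size : LTree → ℕ
  | leaf => 0
  | node l _ r => l.size + r.size + 1

def nleaves : LTree → ℕ
  | leaf => 1
  | node l _ r => l.nleaves + r.nleaves

/-- Forget the labels. -/
def forget : LTree → PBTree
  | leaf => PBTree.leaf
  | node l _ r => PBTree.node l.forget r.forget

/-- All labels are `false`. -/
def allFalse : LTree → Bool
  | leaf => true
  | node l b r => !b && l.allFalse && r.allFalse

/-- The set of `true` nodes forms an upper order ideal of the node poset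
(each node is below its parent; the root is maximal). -/
def isUpperIdeal : LTree → Bool
  | leaf => true
  | node l b r => if b then l.isUpperIdeal && r.isUpperIdeal else l.allFalse && r.allFalse

/-- The leftmost node is labelled `true` and is a minimal element of the ideal,
i.e. its descendants are all labelled `false`.  (Vacuously true for the empty tree.) -/
def leftmostMin : LTree → Bool
  | leaf => true
  | node leaf b r => b && r.allFalse
  | node l _ _ => leftmostMin l

/-- `b` is a bi-leveled tree: the `true` nodes form an upper order ideal containing
the leftmost node as a minimal element. -/
def isBL (b : LTree) : Prop := b.isUpperIdeal = true ∧ b.leftmostMin = true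

end LTree

/-- The number of bi-leveled trees with `n` (internal) nodes. -/
noncomputable def blCount (n : ℕ) : ℕ :=
  {b : LTree | LTree.isBL b ∧ b.size = n}.ncard

namespace BLAux
open LTree Finset

def LTup : ℕ → Finset LTree
  | 0 => {LTree.leaf}
  | n+1 => insert LTree.leaf
      (((LTup n ×ˢ LTup n) ×ˢ ({false, true} : Finset Bool)).image
        fun p => LTree.node p.1.1 p.2 p.1.2)

lemma mem_LTup : ∀ n b, LTree.size b ≤ n → b ∈ LTup n := by
  intro n
  induction n with
  | zero =>
    intro b h
    cases b with
    | leaf => simp [LTup]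
    | node l c r => simp [LTree.size] at h
  | succ n ih =>
    intro b h
    cases b with
    | leaf => simp [LTup]
    | node l c r =>
      simp only [LTree.size] at h
      simp only [LTup, Finset.mem_insert, Finset.mem_image, Finset.mem_product]
      refine Or.inr ⟨⟨⟨l, r⟩, c⟩, ⟨⟨?_, ?_⟩, ?_⟩, rfl⟩
      · exact ih l (by omega)
      · exact ih r (by omega)
      · cases c <;> simp

def N (c : Bool) (A B : Finset LTree) : Finset LTree :=
  (A ×ˢ B).image fun p => LTree.node p.1 c p.2

lemma mem_N {c : Bool} {A B : Finset LTree} {x : LTree} :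
    x ∈ N c A B ↔ ∃ l ∈ A, ∃ r ∈ B, x = LTree.node l c r := by
  simp only [N, Finset.mem_image, Finset.mem_product, Prod.exists]
  constructor
  · rintro ⟨l, r, ⟨hl, hr⟩, rfl⟩; exact ⟨l, hl, r, hr, rfl⟩
  · rintro ⟨l, hl, r, hr, rfl⟩; exact ⟨l, r, ⟨hl, hr⟩, rfl⟩

lemma card_N (c : Bool) (A B : Finset LTree) : (N c A B).card = A.card * B.card := by
  rw [N, Finset.card_image_of_injective _ (fun p q h => ?_), Finset.card_product]
  cases p; cases q; simpa [LTree.node.injEq, Prod.ext_iff] using h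

def AFs (n : ℕ) : Finset LTree := (LTup n).filter fun b => b.size = n ∧ b.allFalse = true
def UIs (n : ℕ) : Finset LTree := (LTup n).filter fun b => b.size = n ∧ b.isUpperIdeal = true
def BLs (n : ℕ) : Finset LTree :=
  (LTup n).filter fun b => b.size = n ∧ b.isUpperIdeal = true ∧ b.leftmostMin = true

lemma mem_AFs {n b} : b ∈ AFs n ↔ b.size = n ∧ b.allFalse = true := by
  simp only [AFs, Finset.mem_filter]
  exact ⟨fun h => h.2, fun h => ⟨mem_LTup _ _ (le_of_eq h.1), h⟩⟩

lemma mem_UIs {n b} : b ∈ UIs n ↔ b.size = n ∧ b.isUpperIdeal = true := by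
  simp only [UIs, Finset.mem_filter]
  exact ⟨fun h => h.2, fun h => ⟨mem_LTup _ _ (le_of_eq h.1), h⟩⟩

lemma mem_BLs {n b} : b ∈ BLs n ↔ b.size = n ∧ b.isUpperIdeal = true ∧ b.leftmostMin = true := by
  simp only [BLs, Finset.mem_filter]
  exact ⟨fun h => h.2, fun h => ⟨mem_LTup _ _ (le_of_eq h.1), h⟩⟩

lemma AF_imp_UI : ∀ b : LTree, b.allFalse = true → b.isUpperIdeal = true := by
  intro b
  induction b with
  | leaf => simp [allFalse, isUpperIdeal]
  | node l c r ihl ihr =>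
    simp only [allFalse, isUpperIdeal, Bool.and_eq_true, Bool.not_eq_true']
    rintro ⟨⟨rfl, h1⟩, h2⟩
    simp [h1, h2]

lemma AF_LM : ∀ b : LTree, b.allFalse = true → b ≠ LTree.leaf → b.leftmostMin = false := by
  intro b
  induction b with
  | leaf => simp
  | node l c r ihl ihr =>
    simp only [allFalse, Bool.and_eq_true, Bool.not_eq_true']
    rintro ⟨⟨rfl, h1⟩, h2⟩ -
    cases l with
    | leaf => simp [leftmostMin]
    | node a d e => exact ihl h1 (by simp)

lemma LM_node (l : LTree) (c : Bool) (r : LTree) (h : l ≠ LTree.leaf) :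
    (LTree.node l c r).leftmostMin = l.leftmostMin := by
  cases l with
  | leaf => exact absurd rfl h
  | node a d e => rfl

lemma size_eq_zero {b : LTree} (h : b.size = 0) : b = LTree.leaf := by
  cases b with
  | leaf => rfl
  | node l c r => simp [size] at h

lemma N_disjoint {c c' : Bool} {A B A' B' : Finset LTree} {i j : ℕ}
    (hA : ∀ x ∈ A, x.size = i) (hA' : ∀ x ∈ A', x.size = j)
    (h : i ≠ j ∨ c ≠ c') : Disjoint (N c A B) (N c' A' B') := by
  rw [Finset.disjoint_left]
  rintro x hx hx'
  obtain ⟨l, hl, r, hr, rfl⟩ := mem_N.mp hx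
  obtain ⟨l', hl', r', hr', heq⟩ := mem_N.mp hx'
  injection heq with h1 h2 h3
  subst h1; subst h2
  rcases h with h | h
  · exact h (by rw [← hA l hl, ← hA' l hl'])
  · exact h rfl

-- Decompositions
lemma AFs_succ (n : ℕ) :
    AFs (n+1) = (Finset.range (n+1)).biUnion fun i => N false (AFs i) (AFs (n-i)) := by
  ext b
  simp only [mem_AFs, Finset.mem_biUnion, Finset.mem_range, mem_N, mem_AFs]
  constructor
  · rintro ⟨hs, hf⟩
    cases b with
    | leaf => simp [size] at hs
    | node l c r =>
      simp only [allFalse, Bool.and_eq_true, Bool.not_eq_true'] at hf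
      obtain ⟨⟨rfl, h1⟩, h2⟩ := hf
      simp only [size] at hs
      exact ⟨l.size, by omega, l, ⟨rfl, h1⟩, r, ⟨by omega, h2⟩, rfl⟩
  · rintro ⟨i, hi, l, hl, r, hr, rfl⟩
    refine ⟨?_, ?_⟩
    · simp only [size, hl.1, hr.1]; omega
    · simp [allFalse, hl.2, hr.2]

lemma UIs_succ (n : ℕ) :
    UIs (n+1) = (Finset.range (n+1)).biUnion fun i =>
      N true (UIs i) (UIs (n-i)) ∪ N false (AFs i) (AFs (n-i)) := by
  ext b
  simp only [mem_UIs, mem_AFs, Finset.mem_biUnion, Finset.mem_range, Finset.mem_union, mem_N]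
  constructor
  · rintro ⟨hs, hu⟩
    cases b with
    | leaf => simp [size] at hs
    | node l c r =>
      simp only [size] at hs
      cases c with
      | true =>
        simp only [isUpperIdeal] at hu
        rw [if_pos trivial, Bool.and_eq_true] at hu
        exact ⟨l.size, by omega, Or.inl ⟨l, ⟨rfl, hu.1⟩, r, ⟨by omega, hu.2⟩, rfl⟩⟩
      | false =>
        simp only [isUpperIdeal] at hu
        rw [if_neg (by simp), Bool.and_eq_true] at hu
        exact ⟨l.size, by omega, Or.inr ⟨l, ⟨rfl, hu.1⟩, r, ⟨by omega, hu.2⟩, rfl⟩⟩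
  · rintro ⟨i, hi, ⟨l, hl, r, hr, rfl⟩ | ⟨l, hl, r, hr, rfl⟩⟩
    · exact ⟨by simp only [size, hl.1, hr.1]; omega, by simp [isUpperIdeal, hl.2, hr.2]⟩
    · exact ⟨by simp only [size, hl.1, hr.1]; omega, by simp [isUpperIdeal, hl.2, hr.2]⟩

lemma BLs_succ (n : ℕ) :
    BLs (n+1) = N true {LTree.leaf} (AFs n) ∪
      (Finset.Ico 1 (n+1)).biUnion fun i => N true (BLs i) (UIs (n-i)) := by
  ext b
  simp only [mem_BLs, mem_UIs, mem_AFs, Finset.mem_union, Finset.mem_biUnion, Finset.mem_Ico,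
    mem_N, Finset.mem_singleton]
  constructor
  · rintro ⟨hs, hu, hm⟩
    cases b with
    | leaf => simp [size] at hs
    | node l c r =>
      simp only [size] at hs
      cases l with
      | leaf =>
        simp only [leftmostMin, Bool.and_eq_true] at hm
        obtain ⟨rfl, hr⟩ := hm
        exact Or.inl ⟨LTree.leaf, rfl, r, ⟨by simp [size] at hs ⊢; omega, hr⟩, rfl⟩
      | node a d e =>
        rw [LM_node _ _ _ (by simp)] at hm
        cases c with
        | false =>
          simp only [isUpperIdeal] at hu
          rw [if_neg (by simp), Bool.and_eq_true] at hu
          have := AF_LM _ hu.1 (by simp)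
          rw [hm] at this; exact absurd this (by simp)
        | true =>
          simp only [isUpperIdeal] at hu
          rw [if_pos trivial, Bool.and_eq_true] at hu
          exact Or.inr ⟨(LTree.node a d e).size, ⟨by simp [size], by omega⟩,
            LTree.node a d e, ⟨rfl, hu.1, hm⟩, r, ⟨by omega, hu.2⟩, rfl⟩
  · rintro (⟨l, rfl, r, hr, rfl⟩ | ⟨i, ⟨hi1, hi2⟩, l, hl, r, hr, rfl⟩)
    · refine ⟨by simp [size, hr.1], ?_, ?_⟩
      · simp [isUpperIdeal, AF_imp_UI r hr.2]
      · simp [leftmostMin, hr.2]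
    · have hlne : l ≠ LTree.leaf := by
        intro h; rw [h] at hl; simp [size] at hl; omega
      refine ⟨by simp only [size, hl.1, hr.1]; omega, ?_, ?_⟩
      · simp [isUpperIdeal, hl.2.1, hr.2]
      · rw [LM_node _ _ _ hlne]; exact hl.2.2

-- size normalization for disjointness
lemma AFs_size : ∀ x ∈ AFs i, x.size = i := fun x hx => (mem_AFs.mp hx).1
lemma UIs_size : ∀ x ∈ UIs i, x.size = i := fun x hx => (mem_UIs.mp hx).1
lemma BLs_size : ∀ x ∈ BLs i, x.size = i := fun x hx => (mem_BLs.mp hx).1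

lemma AFs_zero : AFs 0 = {LTree.leaf} := by
  ext b
  rw [mem_AFs, Finset.mem_singleton]
  constructor
  · rintro ⟨h, -⟩; exact size_eq_zero h
  · rintro rfl; exact ⟨rfl, rfl⟩

lemma UIs_zero : UIs 0 = {LTree.leaf} := by
  ext b
  rw [mem_UIs, Finset.mem_singleton]
  constructor
  · rintro ⟨h, -⟩; exact size_eq_zero h
  · rintro rfl; exact ⟨rfl, rfl⟩

lemma BLs_zero : BLs 0 = {LTree.leaf} := by
  ext b
  rw [mem_BLs, Finset.mem_singleton]
  constructor
  · rintro ⟨h, -⟩; exact size_eq_zero h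
  · rintro rfl; exact ⟨rfl, rfl, rfl⟩

-- card recurrences
lemma card_AFs_succ (n : ℕ) :
    (AFs (n+1)).card = ∑ i ∈ Finset.range (n+1), (AFs i).card * (AFs (n-i)).card := by
  rw [AFs_succ, Finset.card_biUnion]
  · exact Finset.sum_congr rfl fun i _ => card_N _ _ _
  · intro i _ j _ hij
    exact N_disjoint AFs_size AFs_size (Or.inl hij)

lemma card_UIs_succ (n : ℕ) :
    (UIs (n+1)).card = ∑ i ∈ Finset.range (n+1),
      ((UIs i).card * (UIs (n-i)).card + (AFs i).card * (AFs (n-i)).card) := by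
  rw [UIs_succ, Finset.card_biUnion]
  · refine Finset.sum_congr rfl fun i _ => ?_
    rw [Finset.card_union_of_disjoint (N_disjoint UIs_size AFs_size (Or.inr (by simp))),
      card_N, card_N]
  · intro i _ j _ hij
    simp only [Finset.disjoint_union_left, Finset.disjoint_union_right]
    refine ⟨⟨?_, ?_⟩, ?_, ?_⟩
    · exact N_disjoint UIs_size UIs_size (Or.inl hij)
    · exact N_disjoint AFs_size UIs_size (Or.inl hij)
    · exact N_disjoint UIs_size AFs_size (Or.inl hij)
    · exact N_disjoint AFs_size AFs_size (Or.inl hij)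

lemma card_BLs_succ (n : ℕ) :
    (BLs (n+1)).card = (AFs n).card +
      ∑ i ∈ Finset.Ico 1 (n+1), (BLs i).card * (UIs (n-i)).card := by
  rw [BLs_succ, Finset.card_union_of_disjoint, Finset.card_biUnion]
  · rw [card_N, Finset.card_singleton, one_mul]
    exact congrArg _ (Finset.sum_congr rfl fun i _ => card_N _ _ _)
  · intro i _ j _ hij
    exact N_disjoint BLs_size BLs_size (Or.inl hij)
  · rw [Finset.disjoint_biUnion_right]
    intro i hi
    refine N_disjoint (i := 0) (j := i) (fun x hx => ?_) BLs_size (Or.inl ?_)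
    · rw [Finset.mem_singleton] at hx; rw [hx]; rfl
    · rw [Finset.mem_Ico] at hi; omega

lemma AFs_card_catalan : ∀ n, (AFs n).card = catalan n := by
  intro n
  induction n using Nat.strong_induction_on with
  | _ n ih =>
    cases n with
    | zero => simp [AFs_zero]
    | succ m =>
      rw [card_AFs_succ, catalan_succ, ← Finset.sum_range fun i => catalan i * catalan (m - i)]
      refine Finset.sum_congr rfl fun i hi => ?_
      rw [Finset.mem_range] at hi
      rw [ih i (by omega), ih (m - i) (by omega)]

lemma UIs_eq_BLs_succ : ∀ n, (UIs n).card = (BLs (n+1)).card := by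
  intro n
  induction n using Nat.strong_induction_on with
  | _ n ih =>
    cases n with
    | zero =>
      rw [UIs_zero, card_BLs_succ]
      simp [AFs_zero]
    | succ m =>
      rw [card_UIs_succ, card_BLs_succ, Finset.sum_add_distrib, ← card_AFs_succ]
      have h1 : ∑ i ∈ Finset.Ico 1 (m+2), (BLs i).card * (UIs (m+1-i)).card
          = ∑ i ∈ Finset.range (m+1), (UIs i).card * (UIs (m-i)).card := by
        rw [Finset.sum_Ico_eq_sum_range]
        refine Finset.sum_congr (by norm_num) fun i hi => ?_
        rw [Finset.mem_range] at hi
        have h3 : m + 1 - (i + 1) = m - i := by omega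
        rw [add_comm 1 i, ← ih i (by omega), h3]
      rw [h1]
      ring

-- identification with blCount
lemma blCount_eq (n : ℕ) : blCount n = (BLs n).card := by
  rw [blCount]
  have : {b : LTree | LTree.isBL b ∧ b.size = n} = ↑(BLs n) := by
    ext b
    simp only [Set.mem_setOf_eq, Finset.coe_sort_coe, Finset.mem_coe, mem_BLs, LTree.isBL]
    tauto
  rw [this, Set.ncard_coe_finset]

end BLAux

open BLAux

/-- The number `A n` of bi-leveled trees on `n` nodes satisfies
`A 0 = 1` and, for `n ≥ 1`, `A n = C (n-1) + ∑_{i=1}^{n-1} A i * A (n-i)`,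
where `C` is the Catalan number. -/
theorem blCount_recurrence :
    blCount 0 = 1 ∧
    ∀ n : ℕ, 1 ≤ n →
      blCount n = catalan (n - 1) + ∑ i ∈ Finset.Ico 1 n, blCount i * blCount (n - i) := by
  constructor
  · rw [blCount_eq, BLs_zero]; rfl
  · intro n hn
    obtain ⟨m, rfl⟩ : ∃ m, n = m + 1 := ⟨n - 1, by omega⟩
    rw [blCount_eq, card_BLs_succ, AFs_card_catalan]
    simp only [Nat.add_sub_cancel]
    congr 1
    refine Finset.sum_congr rfl fun i hi => ?_
    rw [Finset.mem_Ico] at hi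
    rw [blCount_eq, blCount_eq, UIs_eq_BLs_succ]
    have h2 : m + 1 - i = m - i + 1 := by omega
    rw [h2]
end

section
/- Let M(q) = Σ_{n≥0} A_n q^n be the generating function of bi-leveled trees and Y(q) = Σ_{n≥0} C_n q^n the Catalan generating function. Then M(q) = 1 + q·Y(q)·Y(q·Y(q)) as formal power series. -/
open PowerSeries

/-- Composition of formal power series (valid when `g` has zero constant term):
the `N`-th coefficient of `f ∘ g` is `∑_{n ≤ N} f_n · [q^N](g^n)`. -/
noncomputable def psComp (f g : PowerSeries ℚ) : PowerSeries ℚ :=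
  PowerSeries.mk fun N => ∑ n ∈ Finset.range (N + 1),
    (PowerSeries.coeff n f) * PowerSeries.coeff N (g ^ n)

/-- The Catalan generating function `Y(q) = ∑ C_n q^n`. -/
noncomputable def Yser : PowerSeries ℚ := PowerSeries.mk fun n => (catalan n : ℚ)

/-- The generating function `M(q) = ∑ A_n q^n` of bi-leveled trees. -/
noncomputable def Mser : PowerSeries ℚ := PowerSeries.mk fun n => (blCount n : ℚ)

/-- The numbers `B n`: `B 1 = 1` and for `n > 1`,
`B n = ∑_{k=0}^{n-1} (k/(n-1)) · C(2n-k-3, n-k-1) · C_k`. -/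
noncomputable def Bnum : ℕ → ℚ := fun n =>
  if n = 1 then 1
  else if 2 ≤ n then
    ∑ k ∈ Finset.range n,
      ((k : ℚ) / ((n : ℚ) - 1)) * (Nat.choose (2 * n - k - 3) (n - k - 1) : ℚ) * (catalan k : ℚ)
  else 0

/-! Splitting a tree at its root turns each of the three tree conditions into an equation between
generating functions by size: all-false trees are counted by the Catalan series `Y`, upper-ideal
trees by a series `U` with `U = 1 + q (U² + Y²)`, and bi-leveled trees by `M` with
`M = 1 + q (Y + (M - 1) U)`. Substituting `q Y` into `Y = 1 + q Y²` shows that `Z = Y(q Y)` solves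
`Z = 1 + q Y Z²`, so `Y Z` satisfies the equation of `U`. Each of these equations determines its
solution, because `D = q E D` forces `D = 0`; hence `U = Y Z` and `M = 1 + q Y Z`. -/

open Finset

theorem PowerSeries.eq_of_sub_eq_X_mul_mul {R : Type*} [CommRing R] {a b e : R⟦X⟧}
    (h : a - b = X * e * (a - b)) : a = b := by
  nontriviality R
  rw [← sub_eq_zero, ← order_eq_top]
  by_contra hne
  have hle : 1 + (a - b).order ≤ (a - b).order := calc
    1 + (a - b).order ≤ (X * e).order + (a - b).order := by
      gcongr
      exact (order_X (R := R)).symm.le.trans (le_self_add.trans (le_order_mul _ _))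
    _ ≤ (a - b).order := (le_order_mul _ _).trans_eq (congrArg order h.symm)
  lift (a - b).order to ℕ using hne with k
  norm_cast at hle
  omega

theorem psComp_eq_subst {f g : ℚ⟦X⟧} (hg : constantCoeff g = 0) : psComp f g = f.subst g := by
  ext N
  rw [coeff_subst' (HasSubst.of_constantCoeff_zero' hg),
    finsum_eq_sum_of_support_subset (s := range (N + 1))]
  · simp [psComp]
  · intro d hd
    by_contra hdN
    refine hd (smul_eq_zero_of_right _ (coeff_of_lt_order _ ?_))
    exact lt_of_lt_of_le (by simpa using hdN) (le_order_pow_of_constantCoeff_eq_zero d hg)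

theorem Yser_eq_map_catalanSeries : Yser = catalanSeries.map (Nat.castRingHom ℚ) := by
  ext n
  simp [Yser]

theorem Yser_eq_one_add_X_mul_sq : Yser = 1 + X * Yser ^ 2 := by
  have h := congrArg (map (Nat.castRingHom ℚ)) catalanSeries_sq_mul_X_add_one
  simp only [map_add, map_mul, map_pow, map_X, map_one, ← Yser_eq_map_catalanSeries] at h
  linear_combination -h

theorem psComp_Yser_X_mul_Yser_eq :
    psComp Yser (X * Yser) = 1 + X * Yser * psComp Yser (X * Yser) ^ 2 := by
  have hg : HasSubst (X * Yser) := HasSubst.of_constantCoeff_zero' (by simp)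
  have h := congrArg (substAlgHom (R := ℚ) hg) Yser_eq_one_add_X_mul_sq
  simp only [map_add, map_one, map_mul, map_pow, coe_substAlgHom, subst_X hg] at h
  rwa [psComp_eq_subst (by simp)]

namespace LTree

def nodeEmb : LTree × Bool × LTree ↪ LTree :=
  ⟨fun x => node x.1 x.2.1 x.2.2, by rintro ⟨l, b, r⟩ ⟨l', b', r'⟩ ⟨⟩; rfl⟩

@[simp]
theorem nodeEmb_apply (x : LTree × Bool × LTree) : nodeEmb x = node x.1 x.2.1 x.2.2 := rfl

def ofSize : ℕ → Finset LTree
  | 0 => {leaf}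
  | n + 1 => (antidiagonal n).attach.biUnion fun ij =>
      (ofSize ij.1.1 ×ˢ univ ×ˢ ofSize ij.1.2).map nodeEmb
  decreasing_by
    · exact Nat.antidiagonal.fst_lt ij.2
    · exact Nat.antidiagonal.snd_lt ij.2

theorem ofSize_succ (n : ℕ) :
    ofSize (n + 1) = (antidiagonal n).biUnion fun ij =>
      (ofSize ij.1 ×ˢ univ ×ˢ ofSize ij.2).map nodeEmb := by
  rw [ofSize]
  ext
  simp

@[simp]
theorem mem_ofSize {t : LTree} {n : ℕ} : t ∈ ofSize n ↔ t.size = n := by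
  induction t generalizing n <;> cases n <;> simp [ofSize, ofSize_succ, size, *]

theorem ncard_setOf_size_eq (P : LTree → Prop) [DecidablePred P] (n : ℕ) :
    {t | P t ∧ t.size = n}.ncard = #{t ∈ ofSize n | P t} := by
  rw [← Set.ncard_coe_finset]
  congr
  ext
  simp [and_comm]

section GeneratingFunctions

open Classical

noncomputable def sizeGf (P : LTree → Prop) : ℚ⟦X⟧ :=
  mk fun n => #{t ∈ ofSize n | P t}

noncomputable def nodeGf (T : LTree → Bool → LTree → Prop) : ℚ⟦X⟧ :=
  mk fun n => ∑ ij ∈ antidiagonal n, #{x ∈ ofSize ij.1 ×ˢ univ ×ˢ ofSize ij.2 | T x.1 x.2.1 x.2.2}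

theorem sizeGf_eq_add_X_mul_nodeGf (P : LTree → Prop) :
    sizeGf P = (if P leaf then 1 else 0) + X * nodeGf fun l b r => P (node l b r) := by
  ext (_ | n)
  · by_cases h : P leaf <;> simp [sizeGf, ofSize, filter_singleton, h]
  · have hdisj : (antidiagonal n : Set (ℕ × ℕ)).PairwiseDisjoint fun ij =>
        (ofSize ij.1 ×ˢ univ ×ˢ ofSize ij.2).map nodeEmb := by
      simp_rw [Set.PairwiseDisjoint, Set.Pairwise, Function.onFun, disjoint_left]
      aesop
    rw [sizeGf, coeff_mk, ofSize_succ, filter_biUnion,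
      card_biUnion (hdisj.mono fun _ => filter_subset _ _), Nat.cast_sum, map_add,
      apply_ite (coeff (n + 1)), coeff_one, if_neg n.succ_ne_zero, map_zero, ite_self, zero_add,
      coeff_succ_X_mul, nodeGf, coeff_mk]
    simp only [filter_map, card_map]
    rfl

theorem nodeGf_or {T₁ T₂ : LTree → Bool → LTree → Prop} (h : ∀ l b r, ¬(T₁ l b r ∧ T₂ l b r)) :
    nodeGf (fun l b r => T₁ l b r ∨ T₂ l b r) = nodeGf T₁ + nodeGf T₂ := by
  ext n
  simp only [nodeGf, coeff_mk, map_add, ← sum_add_distrib, filter_or]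
  refine sum_congr rfl fun ij _ => ?_
  rw [card_union_of_disjoint (disjoint_filter.2 fun x _ => not_and.1 (h _ _ _)), Nat.cast_add]

theorem nodeGf_and (Q R : LTree → Prop) (b : Bool) :
    nodeGf (fun l c r => Q l ∧ c = b ∧ R r) = sizeGf Q * sizeGf R := by
  ext n
  simp only [nodeGf, sizeGf, coeff_mk, coeff_mul]
  refine sum_congr rfl fun ij _ => ?_
  have hprod : {x ∈ ofSize ij.1 ×ˢ (univ : Finset Bool) ×ˢ ofSize ij.2 | Q x.1 ∧ x.2.1 = b ∧ R x.2.2} =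
      {t ∈ ofSize ij.1 | Q t} ×ˢ {b} ×ˢ {t ∈ ofSize ij.2 | R t} := by
    ext ⟨l, c, r⟩
    simp only [mem_filter, mem_product, mem_univ, mem_singleton, true_and]
    tauto
  rw [hprod, card_product, card_product, card_singleton, one_mul, Nat.cast_mul]

theorem sizeGf_eq_leaf : sizeGf (· = leaf) = 1 := by
  ext (_ | n) <;> simp [sizeGf, coeff_one, filter_eq', size]

theorem sizeGf_and_add_sizeGf_and_not (P Q : LTree → Prop) :
    sizeGf (fun t => P t ∧ Q t) + sizeGf (fun t => P t ∧ ¬Q t) = sizeGf P := by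
  ext n
  simp only [sizeGf, coeff_mk, map_add, ← filter_filter]
  rw [← Nat.cast_add, card_filter_add_card_filter_not]

end GeneratingFunctions

theorem allFalse_node {l r : LTree} {b : Bool} :
    (node l b r).allFalse ↔ l.allFalse ∧ b = false ∧ r.allFalse := by
  simp only [allFalse, Bool.and_eq_true, Bool.not_eq_eq_eq_not, Bool.not_true]
  tauto

theorem isUpperIdeal_of_allFalse {t : LTree} (h : t.allFalse) : t.isUpperIdeal := by
  cases t with
  | leaf => rfl
  | node l b r =>
    obtain ⟨hl, rfl, hr⟩ := allFalse_node.1 h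
    simp [isUpperIdeal, hl, hr]

theorem leftmostMin_eq_false_of_allFalse {t : LTree} (h : t.allFalse) (ht : t ≠ leaf) :
    t.leftmostMin = false := by
  induction t with
  | leaf => exact absurd rfl ht
  | node l b r ihl _ =>
    obtain ⟨hl, rfl, -⟩ := allFalse_node.1 h
    cases l with
    | leaf => rfl
    | node => exact ihl hl nofun

theorem isUpperIdeal_node {l r : LTree} {b : Bool} :
    (node l b r).isUpperIdeal ↔
      (l.isUpperIdeal ∧ b = true ∧ r.isUpperIdeal) ∨ (l.allFalse ∧ b = false ∧ r.allFalse) := by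
  cases b <;> simp [isUpperIdeal]

theorem isBL_node {l r : LTree} {b : Bool} :
    (node l b r).isBL ↔
      (l = leaf ∧ b = true ∧ r.allFalse) ∨ ((l.isBL ∧ l ≠ leaf) ∧ b = true ∧ r.isUpperIdeal) := by
  cases l with
  | leaf =>
    cases b
    · simp [isBL, leftmostMin]
    · simpa [isBL, isUpperIdeal, leftmostMin] using @isUpperIdeal_of_allFalse r
  | node ll lb lr =>
    cases b
    · refine iff_of_false (fun ⟨hu, hm⟩ => ?_) (by simp)
      have hl : (node ll lb lr).allFalse := by
        simp only [isUpperIdeal, Bool.false_eq_true, if_false, Bool.and_eq_true] at hu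
        exact hu.1
      exact absurd hm (by simp [leftmostMin, leftmostMin_eq_false_of_allFalse hl nofun])
    · simp only [isBL, isUpperIdeal, ↓reduceIte, Bool.and_eq_true, leftmostMin, ne_eq,
        reduceCtorEq, not_false_eq_true, and_true, true_and, false_and, false_or]
      tauto

theorem sizeGf_allFalse :
    sizeGf (allFalse · = true) = 1 + X * sizeGf (allFalse · = true) ^ 2 := by
  refine (sizeGf_eq_add_X_mul_nodeGf _).trans ?_
  simp only [allFalse_node]
  rw [nodeGf_and, sq]
  simp [allFalse]

theorem sizeGf_isUpperIdeal :
    sizeGf (isUpperIdeal · = true) =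
      1 + X * (sizeGf (isUpperIdeal · = true) ^ 2 + sizeGf (allFalse · = true) ^ 2) := by
  refine (sizeGf_eq_add_X_mul_nodeGf _).trans ?_
  simp only [isUpperIdeal_node]
  rw [nodeGf_or (by simp), nodeGf_and, nodeGf_and, sq, sq]
  simp [isUpperIdeal]

theorem sizeGf_isBL :
    sizeGf isBL = 1 + X * (sizeGf (allFalse · = true) +
      (sizeGf isBL - 1) * sizeGf (isUpperIdeal · = true)) := by
  have hsplit : sizeGf (fun t => t.isBL ∧ t ≠ leaf) + 1 = sizeGf isBL := by
    rw [← sizeGf_eq_leaf, ← sizeGf_and_add_sizeGf_and_not isBL (· ≠ leaf)]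
    congr 2
    ext t
    constructor
    · rintro rfl
      exact ⟨⟨rfl, rfl⟩, not_not.2 rfl⟩
    · exact fun h => not_not.1 h.2
  refine (sizeGf_eq_add_X_mul_nodeGf _).trans ?_
  simp only [isBL_node]
  rw [nodeGf_or (by tauto), nodeGf_and, nodeGf_and, sizeGf_eq_leaf, ← hsplit, if_pos ⟨rfl, rfl⟩]
  ring

end LTree

theorem Mser_eq_sizeGf_isBL : Mser = LTree.sizeGf LTree.isBL := by
  classical
  ext n
  simp [Mser, LTree.sizeGf, blCount, LTree.ncard_setOf_size_eq]

/-- `M(q) = 1 + q·Y(q)·Y(q·Y(q))` as formal power series, where `M` is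
the generating function of bi-leveled trees and `Y` the Catalan generating function. -/
theorem Mser_eq :
    Mser = 1 + (PowerSeries.X : PowerSeries ℚ) * Yser * psComp Yser (PowerSeries.X * Yser) := by
  open LTree in
  set Z := psComp Yser (X * Yser)
  have hZ : Z = 1 + X * Yser * Z ^ 2 := psComp_Yser_X_mul_Yser_eq
  have hA : sizeGf (allFalse · = true) = Yser :=
    eq_of_sub_eq_X_mul_mul (e := sizeGf (allFalse · = true) + Yser)
      (by linear_combination sizeGf_allFalse - Yser_eq_one_add_X_mul_sq)
  have hIU := sizeGf_isUpperIdeal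
  have hBL := sizeGf_isBL
  rw [hA] at hIU hBL
  have hU : sizeGf (isUpperIdeal · = true) = Yser * Z :=
    eq_of_sub_eq_X_mul_mul (e := sizeGf (isUpperIdeal · = true) + Yser * Z)
      (by linear_combination hIU - Yser * hZ - Yser_eq_one_add_X_mul_sq)
  rw [Mser_eq_sizeGf_isBL]
  exact eq_of_sub_eq_X_mul_mul (e := sizeGf (isUpperIdeal · = true))
    (by linear_combination hBL - X * Yser * hZ + X ^ 2 * Yser * Z * hU)
end

section
/- For all n ≥ 1, B_n ≥ C_{n-1}, where B_1 = 1, B_n = Σ_{k=0}^{n-1} (k/(n-1))·binomial(2n-k-3, n-k-1)·C_k for n > 1, and C_k is the k-th Catalan number. -/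
open PowerSeries

noncomputable def Bterm (n k : ℕ) : ℚ :=
  ((k : ℚ) / ((n : ℚ) - 1)) * (Nat.choose (2 * n - k - 3) (n - k - 1) : ℚ) * (catalan k : ℚ)

theorem Bnum_eq_sum_Bterm {n : ℕ} (hn : 2 ≤ n) : Bnum n = ∑ k ∈ Finset.range n, Bterm n k := by
  rw [Bnum, if_neg (by omega), if_pos hn]
  rfl

theorem Bterm_nonneg {n : ℕ} (hn : 1 ≤ n) (k : ℕ) : 0 ≤ Bterm n k := by
  have : (0 : ℚ) ≤ (n : ℚ) - 1 := by
    rw [sub_nonneg]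
    exact_mod_cast hn
  unfold Bterm
  positivity

theorem Bterm_sub_one {n : ℕ} (hn : 2 ≤ n) : Bterm n (n - 1) = catalan (n - 1) := by
  have hcast : ((n - 1 : ℕ) : ℚ) = (n : ℚ) - 1 := by push_cast [show 1 ≤ n by omega]; ring
  have hne : (n : ℚ) - 1 ≠ 0 := by
    rw [sub_ne_zero]
    exact_mod_cast (show n ≠ 1 by omega)
  rw [Bterm, hcast, div_self hne, show n - (n - 1) - 1 = 0 by omega, Nat.choose_zero_right]
  simp

/-- For all `n ≥ 1`, `B n ≥ C_{n-1}`. -/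
theorem B_ge_catalan : ∀ n : ℕ, 1 ≤ n → (catalan (n - 1) : ℚ) ≤ Bnum n := by
  intro n hn
  obtain rfl | hn2 := hn.eq_or_lt
  · simp [Bnum]
  rw [Bnum_eq_sum_Bterm hn2, ← Bterm_sub_one hn2]
  exact Finset.single_le_sum (fun k _ => Bterm_nonneg hn k) (Finset.mem_range.mpr (by omega))
end

section
/- The coaction ρ : MSym → MSym ⊗ YSym defined on the fundamental basis by ρ(F_b) = Σ over splittings b → (b_0, b_1) of F_{b_0} ⊗ F_{φ(b_1)} is coassociative and counital, making MSym a right YSym-comodule; moreover ρ ∘ β̄ = (β̄ ⊗ τ̄) ∘ Δ as maps SSym → MSym ⊗ YSym. -/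
namespace LTree

/-- In-order (left-to-right) list of the node labels. -/
def labelsList : LTree → List Bool
  | leaf => []
  | node l b r => labelsList l ++ b :: labelsList r

/-- The order ideal of a bi-leveled tree, as the set of (0-indexed, left-to-right)
positions of its `true` nodes. -/
def idealSet (b : LTree) : Finset ℕ :=
  (Finset.range b.size).filter fun i => (labelsList b).getD i false = true

end LTree

namespace PBTree

/-- One step of the Tamari (rotation) order: a child node is moved from the left to the
right branch across its parent. -/
inductive Rot : PBTree → PBTree → Prop
  | here (a b c : PBTree) : Rot (node (node a b) c) (node a (node b c))
  | left {l l' : PBTree} (r : PBTree) : Rot l l' → Rot (node l r) (node l' r)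
  | right (l : PBTree) {r r' : PBTree} : Rot r r' → Rot (node l r) (node l r')

/-- The Tamari order on planar binary trees. -/
def tamariLe : PBTree → PBTree → Prop := Relation.ReflTransGen Rot

end PBTree

/-- The partial order on bi-leveled trees: `b ≤ c` iff the underlying trees satisfy
`φ(b) ≤ φ(c)` in the Tamari order and the ideal of `c` is contained in that of `b`. -/
def blLe (b c : LTree) : Prop :=
  PBTree.tamariLe b.forget c.forget ∧ c.idealSet ⊆ b.idealSet

theorem List.foldr_max_mem : ∀ w : List ℕ, w ≠ [] → w.foldr max 0 ∈ w := by
  intro w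
  induction w with
  | nil => simp
  | cons a t ih =>
    intro _
    by_cases ht : t = []
    · subst ht; simp
    · rcases max_choice a (t.foldr max 0) with h | h <;>
        simp [List.foldr_cons, h, ih ht]

/-- The Loday–Ronco/Tonks map `τ` on words with distinct letters: recursively, the root
is placed at the position of the largest letter. -/
def tauL (w : List ℕ) : PBTree :=
  if h : w = [] then PBTree.leaf
  else
    let j := w.idxOf (w.foldr max 0)
    PBTree.node (tauL (w.take j)) (tauL (w.drop (j + 1)))
termination_by w.length
decreasing_by
  · have hj : w.idxOf (w.foldr max 0) < w.length :=
      List.idxOf_lt_length_iff.2 (List.foldr_max_mem w h)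
    simp only [List.length_take, List.foldr_attach]; omega
  · have : 0 < w.length := List.length_pos_iff.2 h
    simp only [List.length_drop]; omega

/-- The labelled version of `τ`: a node is labelled `true` iff its value (the maximum of
its subword) is at least the threshold `c`. -/
def tauB (c : ℕ) (w : List ℕ) : LTree :=
  if h : w = [] then LTree.leaf
  else
    let m := w.foldr max 0
    let j := w.idxOf m
    LTree.node (tauB c (w.take j)) (decide (c ≤ m)) (tauB c (w.drop (j + 1)))
termination_by w.length
decreasing_by
  · have hj : w.idxOf (w.foldr max 0) < w.length :=
      List.idxOf_lt_length_iff.2 (List.foldr_max_mem w h)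
    simp only [List.length_take, List.foldr_attach]; omega
  · have : 0 < w.length := List.length_pos_iff.2 h
    simp only [List.length_drop]; omega

/-- The map `β` on words: `β(w) = (τ(w); T(w))` with `T(w) = {i : w i ≥ w 1}`, encoded by
labelling a node `true` iff its value is at least the first letter of `w`. -/
def betaL (w : List ℕ) : LTree := tauB w.headI w

/-- The word (one-line notation, values in `1..n`) of a permutation of `Fin n`. -/
def permWord {n : ℕ} (w : Equiv.Perm (Fin n)) : List ℕ :=
  List.ofFn fun i => (w i : ℕ) + 1

def tauP {n : ℕ} (w : Equiv.Perm (Fin n)) : PBTree := tauL (permWord w)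

def betaP {n : ℕ} (w : Equiv.Perm (Fin n)) : LTree := betaL (permWord w)

/-- The (value) inversion set of a permutation: pairs `a < b` such that `b` occurs
before `a` in one-line notation. -/
def invSet {n : ℕ} (w : Equiv.Perm (Fin n)) : Finset (Fin n × Fin n) :=
  Finset.univ.filter fun p => p.1 < p.2 ∧ w.symm p.2 < w.symm p.1

/-- The left weak order on the symmetric group: containment of inversion sets. -/
def weakLe {n : ℕ} (u v : Equiv.Perm (Fin n)) : Prop := invSet u ⊆ invSet v

open scoped TensorProduct

namespace PBTree

/-- All splittings of a planar binary tree along one leaf. -/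
def psplits : PBTree → Finset (PBTree × PBTree)
  | leaf => {(leaf, leaf)}
  | node l r =>
      ((psplits l).image fun p => (p.1, node p.2 r)) ∪
        ((psplits r).image fun p => (node l p.1, p.2))

/-- All splittings of a planar binary tree along a multiset of `m` leaves, as ordered
forests of `m+1` trees. -/
def msplits : ℕ → PBTree → Finset (List PBTree)
  | 0, t => {[t]}
  | m + 1, t => (psplits t).biUnion fun p => (msplits m p.2).image fun L => p.1 :: L

/-- Graft an ordered forest onto the leaves of a tree. -/
def graft : List PBTree → PBTree → PBTree
  | L, leaf => L.headI
  | L, node l r => node (graft (L.take l.nleaves) l) (graft (L.drop l.nleaves) r)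

end PBTree

namespace LTree

/-- All splittings of a labelled tree along one leaf; the pieces keep their labels. -/
def lsplits : LTree → Finset (LTree × LTree)
  | leaf => {(leaf, leaf)}
  | node l b r =>
      ((lsplits l).image fun p => (p.1, node p.2 b r)) ∪
        ((lsplits r).image fun p => (node l b p.1, p.2))

/-- All splittings of a labelled tree along a multiset of `m` leaves. -/
def msplits : ℕ → LTree → Finset (List LTree)
  | 0, t => {[t]}
  | m + 1, t => (lsplits t).biUnion fun p => (msplits m p.2).image fun L => p.1 :: L

/-- Graft an ordered forest of labelled trees onto the leaves of a labelled tree,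
keeping all labels. -/
def graftL : List LTree → LTree → LTree
  | L, leaf => L.headI
  | L, node l b r => node (graftL (L.take l.nleaves) l) b (graftL (L.drop l.nleaves) r)

/-- Set all labels to `false`. -/
def setFalse : LTree → LTree
  | leaf => leaf
  | node l _ r => node l.setFalse false r.setFalse

/-- Set all labels to `true`. -/
def setTrue : LTree → LTree
  | leaf => leaf
  | node l _ r => node l.setTrue true r.setTrue

end LTree

/-- Label all nodes of a planar tree `true`. -/
def PBTree.trueLab : PBTree → LTree
  | leaf => LTree.leaf
  | node l r => LTree.node l.trueLab true r.trueLab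

/-- Label all nodes of a planar tree `false`. -/
def PBTree.falseLab : PBTree → LTree
  | leaf => LTree.leaf
  | node l r => LTree.node l.falseLab false r.falseLab

/-- Grafting of bi-leveled trees for the product of `MSym`:
`(b_0,…,b_m)/c` carries the order ideal `T(c)` if `b_0` is empty, and
`T(b) ∪ {nodes of c}` otherwise. -/
def mgraft (L : List LTree) (c : LTree) : LTree :=
  if L.headI = LTree.leaf then LTree.graftL (L.map LTree.setFalse) c
  else LTree.graftL L c.setTrue

/-- The underlying vector space of `MSym`: the free `ℚ`-vector space on labelled trees
(`MSym` proper is spanned by the bi-leveled trees, i.e. those satisfying `isBL`). -/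
abbrev MSym : Type := LTree →₀ ℚ

/-- The underlying vector space of the Loday–Ronco Hopf algebra `YSym`. -/
abbrev YSym : Type := PBTree →₀ ℚ

/-- The underlying vector space of the Malvenuto–Reutenauer Hopf algebra `SSym`
(`SSym` proper is spanned by the permutation words). -/
abbrev SSym : Type := List ℕ →₀ ℚ

/-- `w` is (the one-line notation of) a permutation of `{1,…,n}`. -/
def IsPermList (w : List ℕ) : Prop := w.Perm (List.range' 1 w.length)

/-- Standardization of a word with distinct letters. -/
def stdL (w : List ℕ) : List ℕ := w.map fun a => (w.filter (· < a)).length + 1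

/-- All shuffles of two words. -/
def shuffles : List ℕ → List ℕ → List (List ℕ)
  | [], v => [v]
  | u, [] => [u]
  | a :: u, b :: v =>
      ((shuffles u (b :: v)).map (a :: ·)) ++ ((shuffles (a :: u) v).map (b :: ·))
termination_by u v => u.length + v.length

/-- The product of the Malvenuto–Reutenauer algebra `SSym` in the fundamental basis:
`F_u · F_v` is the sum of `F_w` over shuffles `w` of `u` with the shifted word of `v`. -/
noncomputable def mulS : SSym →ₗ[ℚ] SSym →ₗ[ℚ] SSym :=
  Finsupp.lift (SSym →ₗ[ℚ] SSym) ℚ (List ℕ) fun u =>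
    Finsupp.lift SSym ℚ (List ℕ) fun v =>
      ((shuffles u (v.map (· + u.length))).map fun w => Finsupp.single w (1 : ℚ)).sum

/-- The product of `MSym` in the fundamental basis:
`F_b · F_c = ∑_{b → (b_0,…,b_m)} F_{(b_0,…,b_m)/c}` where `m` is the number of nodes
of `c`. -/
noncomputable def mulM : MSym →ₗ[ℚ] MSym →ₗ[ℚ] MSym :=
  Finsupp.lift (MSym →ₗ[ℚ] MSym) ℚ LTree fun b =>
    Finsupp.lift MSym ℚ LTree fun c =>
      ∑ L ∈ LTree.msplits c.size b, Finsupp.single (mgraft L c) (1 : ℚ)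

/-- The product of the Loday–Ronco algebra `YSym` in the fundamental basis. -/
noncomputable def mulY : YSym →ₗ[ℚ] YSym →ₗ[ℚ] YSym :=
  Finsupp.lift (YSym →ₗ[ℚ] YSym) ℚ PBTree fun t =>
    Finsupp.lift YSym ℚ PBTree fun s =>
      ∑ L ∈ PBTree.msplits s.size t, Finsupp.single (PBTree.graft L s) (1 : ℚ)

/-- The map `β̄ : SSym → MSym`, `F_w ↦ F_{β(w)}`. -/
noncomputable def betaBar : SSym →ₗ[ℚ] MSym := Finsupp.lmapDomain ℚ ℚ betaL

/-- The map `τ̄ : SSym → YSym`, `F_w ↦ F_{τ(w)}`. -/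
noncomputable def tauBar : SSym →ₗ[ℚ] YSym := Finsupp.lmapDomain ℚ ℚ tauL

/-- The map `φ̄ : MSym → YSym`, `F_b ↦ F_{φ(b)}`. -/
noncomputable def phiBar : MSym →ₗ[ℚ] YSym := Finsupp.lmapDomain ℚ ℚ LTree.forget

/-- The coproduct of `SSym`: `Δ F_w = ∑_{w → (w_0,w_1)} F_{w_0} ⊗ F_{w_1}`, the pieces
of a splitting being standardized to genuine permutations. -/
noncomputable def deltaS : SSym →ₗ[ℚ] SSym ⊗[ℚ] SSym :=
  Finsupp.lift (SSym ⊗[ℚ] SSym) ℚ (List ℕ) fun w =>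
    ∑ i ∈ Finset.range (w.length + 1),
      Finsupp.single (stdL (w.take i)) (1 : ℚ) ⊗ₜ[ℚ] Finsupp.single (stdL (w.drop i)) (1 : ℚ)

/-- The coproduct of `YSym`: `Δ F_t = ∑_{t → (t_0,t_1)} F_{t_0} ⊗ F_{t_1}`. -/
noncomputable def deltaY : YSym →ₗ[ℚ] YSym ⊗[ℚ] YSym :=
  Finsupp.lift (YSym ⊗[ℚ] YSym) ℚ PBTree fun t =>
    ∑ p ∈ PBTree.psplits t, Finsupp.single p.1 (1 : ℚ) ⊗ₜ[ℚ] Finsupp.single p.2 (1 : ℚ)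

/-- The counit of `YSym`. -/
noncomputable def epsY : YSym →ₗ[ℚ] ℚ :=
  Finsupp.lift ℚ ℚ PBTree fun t => if t = PBTree.leaf then (1 : ℚ) else 0

/-- The coaction `ρ : MSym → MSym ⊗ YSym`,
`ρ(F_b) = ∑_{b → (b_0,b_1)} F_{b_0} ⊗ F_{φ(b_1)}`. -/
noncomputable def rhoM : MSym →ₗ[ℚ] MSym ⊗[ℚ] YSym :=
  Finsupp.lift (MSym ⊗[ℚ] YSym) ℚ LTree fun b =>
    ∑ p ∈ LTree.lsplits b, Finsupp.single p.1 (1 : ℚ) ⊗ₜ[ℚ] Finsupp.single p.2.forget (1 : ℚ)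

/-!
Splittings of a tree are indexed by its leaves. Counitality holds because only the cut
along the last leaf leaves a trivial right piece. Coassociativity holds because cutting
along leaf `j + k` and then along leaf `j` of the left piece produces the same three pieces
as cutting along leaf `j` and then along leaf `k` of the right piece.

For the compatibility, `β(w)` is the Tonks tree `τ(w)` whose nodes are labelled by comparing
their letters with the first letter of `w`. The root of `τ(w)` sits at the maximal letter,
which lies in `w.take i` or in `w.drop i`, so by induction cutting `β(w)` along leaf `i`
yields the labelled Tonks trees of these two factors. Labelled Tonks trees only depend on
the relative order of the letters, hence are unchanged by standardization.
-/

namespace LTree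

theorem nleaves_pos : ∀ t : LTree, 0 < t.nleaves
  | leaf => Nat.one_pos
  | node l _ r => Nat.add_pos_left (nleaves_pos l) r.nleaves

/-- Leaves are numbered from `0`, left to right; `splitL t i` cuts `t` along leaf `i`. -/
def splitL : LTree → ℕ → LTree × LTree
  | leaf, _ => (leaf, leaf)
  | node l c r, i =>
      if i < l.nleaves then ((splitL l i).1, node (splitL l i).2 c r)
      else (node l c (splitL r (i - l.nleaves)).1, (splitL r (i - l.nleaves)).2)

theorem nleaves_splitL_fst : ∀ {t : LTree} {i : ℕ}, i < t.nleaves →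
    (splitL t i).1.nleaves = i + 1
  | leaf, i, h => by simp_all [nleaves, splitL]
  | node l c r, i, h => by
      by_cases hl : i < l.nleaves
      · simp [splitL, hl, nleaves_splitL_fst hl]
      · have hr : i - l.nleaves < r.nleaves := by simp only [nleaves] at h; omega
        simp only [splitL, hl, if_false, nleaves, nleaves_splitL_fst hr]
        omega

theorem nleaves_splitL_snd : ∀ {t : LTree} {i : ℕ}, i < t.nleaves →
    (splitL t i).2.nleaves = t.nleaves - i
  | leaf, i, h => by simp_all [nleaves, splitL]
  | node l c r, i, h => by
      by_cases hl : i < l.nleaves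
      · simp only [splitL, hl, if_true, nleaves, nleaves_splitL_snd hl]
        omega
      · have hr : i - l.nleaves < r.nleaves := by simp only [nleaves] at h; omega
        simp only [splitL, hl, if_false, nleaves, nleaves_splitL_snd hr]
        omega

theorem mem_lsplits_iff : ∀ {t : LTree} {p : LTree × LTree},
    p ∈ lsplits t ↔ ∃ i < t.nleaves, splitL t i = p
  | leaf, p => by simp [lsplits, splitL, nleaves, eq_comm]
  | node l c r, p => by
      simp only [lsplits, Finset.mem_union, Finset.mem_image, mem_lsplits_iff]
      constructor
      · rintro (⟨_, ⟨i, hi, rfl⟩, rfl⟩ | ⟨_, ⟨i, hi, rfl⟩, rfl⟩)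
        · exact ⟨i, by simp only [nleaves]; omega, by simp [splitL, hi]⟩
        · exact ⟨l.nleaves + i, by simp only [nleaves]; omega, by simp [splitL]⟩
      · rintro ⟨i, hi, rfl⟩
        by_cases hl : i < l.nleaves
        · exact Or.inl ⟨_, ⟨i, hl, rfl⟩, by simp [splitL, hl]⟩
        · refine Or.inr ⟨_, ⟨i - l.nleaves, ?_, rfl⟩, by simp [splitL, hl]⟩
          simp only [nleaves] at hi
          omega

theorem lsplits_eq_image (t : LTree) :
    lsplits t = (Finset.range t.nleaves).image (splitL t) := by
  ext p
  simp [mem_lsplits_iff]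

theorem splitL_injOn (t : LTree) : Set.InjOn (splitL t) (Finset.range t.nleaves) := by
  intro i hi j hj h
  have := nleaves_splitL_fst (Finset.mem_range.1 hj)
  rw [← h, nleaves_splitL_fst (Finset.mem_range.1 hi)] at this
  omega

theorem sum_lsplits {M : Type*} [AddCommMonoid M] (t : LTree) (f : LTree × LTree → M) :
    ∑ p ∈ lsplits t, f p = ∑ i ∈ Finset.range t.nleaves, f (splitL t i) := by
  rw [lsplits_eq_image, Finset.sum_image (splitL_injOn t)]

theorem splitL_nleaves_sub_one : ∀ t : LTree, splitL t (t.nleaves - 1) = (t, leaf)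
  | leaf => rfl
  | node l c r => by
      have hl := nleaves_pos l
      have hr := nleaves_pos r
      have hi : ¬ l.nleaves + r.nleaves - 1 < l.nleaves := by omega
      have hsub : l.nleaves + r.nleaves - 1 - l.nleaves = r.nleaves - 1 := by omega
      simp [splitL, nleaves, hi, hsub, splitL_nleaves_sub_one r]

theorem splitL_splitL : ∀ {t : LTree} {j k : ℕ}, j + k < t.nleaves →
    splitL (splitL t (j + k)).1 j = ((splitL t j).1, (splitL (splitL t j).2 k).1) ∧
      (splitL (splitL t j).2 k).2 = (splitL t (j + k)).2
  | leaf, j, k, h => by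
      obtain ⟨rfl, rfl⟩ : j = 0 ∧ k = 0 := by simp only [nleaves] at h; omega
      simp [splitL]
  | node l c r, j, k, h => by
      simp only [nleaves] at h
      by_cases hjk : j + k < l.nleaves
      · obtain ⟨h₁, h₂⟩ := splitL_splitL hjk
        have hj : j < l.nleaves := by omega
        have hk : k < (splitL l j).2.nleaves := by rw [nleaves_splitL_snd hj]; omega
        simp [splitL, hjk, hj, hk, h₁, h₂]
      · by_cases hj : j < l.nleaves
        · have hk : ¬ k < (splitL l j).2.nleaves := by rw [nleaves_splitL_snd hj]; omega
          have hsub : k - (splitL l j).2.nleaves = j + k - l.nleaves := by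
            rw [nleaves_splitL_snd hj]; omega
          simp [splitL, hjk, hj, hk, hsub]
        · have hjk' : j + k - l.nleaves = j - l.nleaves + k := by omega
          obtain ⟨h₁, h₂⟩ := splitL_splitL (t := r) (j := j - l.nleaves) (k := k) (by omega)
          simp [splitL, hjk, hj, hjk', h₁, h₂]

theorem nleaves_forget : ∀ t : LTree, t.forget.nleaves = t.nleaves
  | leaf => rfl
  | node l _ r => by simp [forget, nleaves, PBTree.nleaves, nleaves_forget l, nleaves_forget r]

theorem psplits_forget : ∀ t : LTree,
    PBTree.psplits t.forget = (lsplits t).image (Prod.map forget forget)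
  | leaf => rfl
  | node l _ r => by
      simp only [forget, PBTree.psplits, lsplits, Finset.image_union, Finset.image_image,
        psplits_forget l, psplits_forget r]
      rfl

theorem sum_psplits_forget {M : Type*} [AddCommMonoid M] (t : LTree)
    (f : PBTree × PBTree → M) :
    ∑ p ∈ PBTree.psplits t.forget, f p =
      ∑ i ∈ Finset.range t.nleaves, f ((splitL t i).1.forget, (splitL t i).2.forget) := by
  rw [psplits_forget, lsplits_eq_image, Finset.image_image, Finset.sum_image]
  · rfl
  intro i hi j hj h
  have := congrArg (fun p => p.1.nleaves) h
  simp only [Function.comp_apply, Prod.map_fst, nleaves_forget] at this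
  rw [nleaves_splitL_fst (Finset.mem_range.1 hi),
    nleaves_splitL_fst (Finset.mem_range.1 hj)] at this
  omega

end LTree

section Comodule

open TensorProduct LTree

theorem rhoM_single (b : LTree) :
    rhoM (Finsupp.single b 1) = ∑ i ∈ Finset.range b.nleaves,
      Finsupp.single (splitL b i).1 1 ⊗ₜ[ℚ] Finsupp.single (splitL b i).2.forget 1 := by
  rw [rhoM, Finsupp.lift_apply, Finsupp.sum_single_index (by simp), one_smul, sum_lsplits]

theorem deltaY_single_forget (t : LTree) :
    deltaY (Finsupp.single t.forget 1) = ∑ i ∈ Finset.range t.nleaves,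
      Finsupp.single (splitL t i).1.forget 1 ⊗ₜ[ℚ]
        Finsupp.single (splitL t i).2.forget 1 := by
  rw [deltaY, Finsupp.lift_apply, Finsupp.sum_single_index (by simp), one_smul,
    sum_psplits_forget]

theorem epsY_single (t : PBTree) :
    epsY (Finsupp.single t 1) = if t = PBTree.leaf then 1 else 0 := by
  rw [epsY, Finsupp.lift_apply, Finsupp.sum_single_index (by simp), one_smul]

theorem rhoM_counit :
    (TensorProduct.rid ℚ MSym).toLinearMap ∘ₗ TensorProduct.map LinearMap.id epsY ∘ₗ
      rhoM = LinearMap.id := by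
  refine Finsupp.lhom_ext' fun b => LinearMap.ext_ring ?_
  have hb := nleaves_pos b
  simp only [LinearMap.comp_apply, Finsupp.lsingle_apply, LinearMap.id_apply, rhoM_single,
    map_sum, map_tmul, epsY_single, LinearEquiv.coe_coe, rid_tmul]
  rw [Finset.sum_eq_single_of_mem (b.nleaves - 1) (Finset.mem_range.2 (by omega))]
  · simp [splitL_nleaves_sub_one, forget]
  · intro i hi hne
    have hleaves := nleaves_splitL_snd (Finset.mem_range.1 hi)
    have hnot : (splitL b i).2.forget ≠ PBTree.leaf := fun h => by
      have := nleaves_forget (splitL b i).2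
      rw [h, hleaves] at this
      simp only [PBTree.nleaves, Finset.mem_range] at this hi
      omega
    simp [hnot]

theorem rhoM_coassoc :
    (TensorProduct.assoc ℚ MSym YSym YSym).toLinearMap ∘ₗ
        TensorProduct.map rhoM LinearMap.id ∘ₗ rhoM =
      TensorProduct.map LinearMap.id deltaY ∘ₗ rhoM := by
  refine Finsupp.lhom_ext' fun b => LinearMap.ext_ring ?_
  simp only [LinearMap.comp_apply, Finsupp.lsingle_apply, LinearEquiv.coe_coe, rhoM_single,
    map_sum, map_tmul, LinearMap.id_apply, deltaY_single_forget, sum_tmul, tmul_sum,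
    assoc_tmul]
  rw [Finset.sum_congr rfl fun i hi => by rw [nleaves_splitL_fst (Finset.mem_range.1 hi)]]
  -- both sides now run over pairs of leaves `j ≤ i`; write `i = j + k`
  rw [Finset.sum_comm' (t' := Finset.range b.nleaves) (s' := fun j => Finset.Ico j b.nleaves)
    (by intro i j; simp only [Finset.mem_range, Finset.mem_Ico]; omega)]
  refine Finset.sum_congr rfl fun j hj => ?_
  rw [Finset.sum_Ico_eq_sum_range, ← nleaves_splitL_snd (Finset.mem_range.1 hj)]
  refine Finset.sum_congr rfl fun k hk => ?_
  obtain ⟨h₁, h₂⟩ := splitL_splitL (t := b) (j := j) (k := k) (by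
    have := nleaves_splitL_snd (Finset.mem_range.1 hj)
    simp only [Finset.mem_range] at hk hj
    omega)
  rw [h₁, h₂]

end Comodule

theorem List.foldr_max_eq_of_forall_le {w : List ℕ} {m : ℕ} (hm : m ∈ w)
    (hmax : ∀ x ∈ w, x ≤ m) :
    w.foldr max 0 = m :=
  le_antisymm (List.max_le_of_forall_le w m hmax) (List.le_max_of_le' 0 hm le_rfl)

/-- Induction along the recursion of `tauL` and `tauB`. -/
theorem List.induction_split_max {motive : List ℕ → Prop} (nil : motive [])
    (split : ∀ (w : List ℕ) (k : ℕ) (hk : k < w.length), w.idxOf w[k] = k →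
      (∀ x ∈ w, x ≤ w[k]) → motive (w.take k) → motive (w.drop (k + 1)) → motive w)
    (w : List ℕ) : motive w := by
  induction w using tauL.induct with
  | case1 => exact nil
  | case2 w hne j ih₁ ih₂ =>
    have hk := List.idxOf_lt_length_iff.2 (List.foldr_max_mem w hne)
    have hwk : w[w.idxOf (w.foldr max 0)] = w.foldr max 0 := List.getElem_idxOf hk
    refine split w (w.idxOf (w.foldr max 0)) hk (by rw [hwk])
      (fun x hx => by rw [hwk]; exact List.le_max_of_le' 0 hx le_rfl) ?_ ?_
    · simpa only [j, List.foldr_attach] using ih₁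
    · simpa only [j, List.foldr_attach] using ih₂

theorem tauB_nil (c : ℕ) : tauB c [] = LTree.leaf := by
  rw [tauB]; rfl

theorem tauB_eq_node (c : ℕ) {w : List ℕ} {k m : ℕ} (hk : k < w.length) (hwk : w[k] = m)
    (hidx : w.idxOf m = k) (hmax : ∀ x ∈ w, x ≤ m) :
    tauB c w = LTree.node (tauB c (w.take k)) (decide (c ≤ m)) (tauB c (w.drop (k + 1))) := by
  rw [tauB]
  simp [List.ne_nil_of_length_pos (Nat.zero_lt_of_lt hk),
    List.foldr_max_eq_of_forall_le (hwk ▸ List.getElem_mem hk) hmax, hidx]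

theorem tauL_eq_node {w : List ℕ} {k : ℕ} (hk : k < w.length) (hidx : w.idxOf w[k] = k)
    (hmax : ∀ x ∈ w, x ≤ w[k]) :
    tauL w = PBTree.node (tauL (w.take k)) (tauL (w.drop (k + 1))) := by
  rw [tauL]
  simp [List.ne_nil_of_length_pos (Nat.zero_lt_of_lt hk),
    List.foldr_max_eq_of_forall_le (List.getElem_mem hk) hmax, hidx]

theorem tauB_eq_node_of_nodup (c : ℕ) {w : List ℕ} (hw : w.Nodup) {k m : ℕ}
    (hk : k < w.length) (hwk : w[k] = m) (hmax : ∀ x ∈ w, x ≤ m) :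
    tauB c w = LTree.node (tauB c (w.take k)) (decide (c ≤ m)) (tauB c (w.drop (k + 1))) :=
  tauB_eq_node c hk hwk (hwk ▸ hw.idxOf_getElem k hk) hmax

theorem nleaves_tauB (c : ℕ) (w : List ℕ) : (tauB c w).nleaves = w.length + 1 := by
  induction w using List.induction_split_max with
  | nil => rw [tauB_nil]; rfl
  | split w k hk hidx hmax ih₁ ih₂ =>
    rw [tauB_eq_node c hk rfl hidx hmax, LTree.nleaves, ih₁, ih₂, List.length_take,
      List.length_drop]
    omega

theorem forget_tauB (c : ℕ) (w : List ℕ) : (tauB c w).forget = tauL w := by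
  induction w using List.induction_split_max with
  | nil => rw [tauB_nil, tauL]; rfl
  | split w k hk hidx hmax ih₁ ih₂ =>
    rw [tauB_eq_node c hk rfl hidx hmax, tauL_eq_node hk hidx hmax, LTree.forget, ih₁, ih₂]

theorem splitL_tauB (c : ℕ) {w : List ℕ} (hw : w.Nodup) {i : ℕ} (hi : i ≤ w.length) :
    LTree.splitL (tauB c w) i = (tauB c (w.take i), tauB c (w.drop i)) := by
  induction w using List.induction_split_max generalizing i with
  | nil =>
    obtain rfl : i = 0 := by simpa using hi
    simp [tauB_nil, LTree.splitL]
  | split w k hk hidx hmax ih₁ ih₂ =>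
    have hleft : (tauB c (w.take k)).nleaves = k + 1 := by
      rw [nleaves_tauB, List.length_take]; omega
    rw [tauB_eq_node c hk rfl hidx hmax]
    by_cases hik : i < k + 1
    · have hsplit := ih₁ (hw.sublist (List.take_sublist k w)) (i := i)
        (by rw [List.length_take]; omega)
      simp only [LTree.splitL, hleft, hik, if_true, hsplit, List.take_take,
        min_eq_left (by omega : i ≤ k), Prod.mk.injEq, true_and]
      rw [tauB_eq_node_of_nodup c (hw.sublist (List.drop_sublist i w)) (k := k - i)
          (by rw [List.length_drop]; omega) (by simp [show i + (k - i) = k by omega])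
          (fun x hx => hmax x (List.mem_of_mem_drop hx)),
        List.drop_drop, List.drop_take, show i + (k - i + 1) = k + 1 by omega]
    · have hsplit := ih₂ (hw.sublist (List.drop_sublist (k + 1) w)) (i := i - (k + 1))
        (by rw [List.length_drop]; omega)
      simp only [LTree.splitL, hleft, hik, if_false, hsplit, List.drop_drop,
        show k + 1 + (i - (k + 1)) = i by omega, Prod.mk.injEq, and_true]
      rw [tauB_eq_node_of_nodup c (hw.sublist (List.take_sublist i w)) (k := k)
          (by rw [List.length_take]; omega) (by simp)
          (fun x hx => hmax x (List.mem_of_mem_take hx)),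
        List.take_take, min_eq_left (by omega : k ≤ i), List.drop_take]

theorem tauB_map {f : ℕ → ℕ} {c c' : ℕ} {w : List ℕ} (hw : w.Nodup)
    (hf : StrictMonoOn f {x | x ∈ w}) (hc : ∀ x ∈ w, c' ≤ f x ↔ c ≤ x) :
    tauB c' (w.map f) = tauB c w := by
  induction w using List.induction_split_max with
  | nil => rw [List.map_nil, tauB_nil, tauB_nil]
  | split w k hk hidx hmax ih₁ ih₂ =>
    have hwk : w[k] ∈ w := List.getElem_mem hk
    have hmax' : ∀ y ∈ w.map f, y ≤ f w[k] := by
      intro y hy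
      obtain ⟨x, hx, rfl⟩ := List.mem_map.1 hy
      exact hf.monotoneOn hx hwk (hmax x hx)
    rw [tauB_eq_node c hk rfl hidx hmax,
      tauB_eq_node_of_nodup c' (hw.map_on fun x hx y hy => hf.injOn hx hy) (k := k)
        (by simpa using hk) (by simp) hmax',
      ← List.map_take, ← List.map_drop,
      ih₁ (hw.sublist (List.take_sublist k w)) (hf.mono fun x hx => List.mem_of_mem_take hx)
        (fun x hx => hc x (List.mem_of_mem_take hx)),
      ih₂ (hw.sublist (List.drop_sublist _ w)) (hf.mono fun x hx => List.mem_of_mem_drop hx)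
        (fun x hx => hc x (List.mem_of_mem_drop hx))]
    simp only [hc _ hwk]

def stdRank (w : List ℕ) (a : ℕ) : ℕ := (w.filter (· < a)).length + 1

theorem stdL_eq_map (w : List ℕ) : stdL w = w.map (stdRank w) := rfl

theorem stdRank_strictMonoOn (w : List ℕ) : StrictMonoOn (stdRank w) {x | x ∈ w} := by
  intro a ha b _ hab
  have hlt : ((w.filter (· < b)).filter (· < a)).length < (w.filter (· < b)).length :=
    List.length_filter_lt_length_iff_exists.2
      ⟨a, List.mem_filter.2 ⟨ha, decide_eq_true hab⟩, by simp⟩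
  have hfilter : (w.filter (· < b)).filter (· < a) = w.filter (· < a) := by
    rw [List.filter_filter]
    congr 1
    funext x
    simp only [Bool.and_eq_left_iff_imp, decide_eq_true_eq]
    omega
  rw [hfilter] at hlt
  simp only [stdRank]
  omega

theorem betaL_stdL {w : List ℕ} (hw : w.Nodup) : betaL (stdL w) = betaL w := by
  cases w with
  | nil => rfl
  | cons a u =>
    have hmono := stdRank_strictMonoOn (a :: u)
    rw [betaL, betaL, stdL_eq_map, List.map_cons, List.headI_cons, ← List.map_cons]
    exact tauB_map hw hmono fun x hx => hmono.le_iff_le List.mem_cons_self hx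

theorem tauL_stdL {w : List ℕ} (hw : w.Nodup) : tauL (stdL w) = tauL w := by
  rw [← forget_tauB 0, ← forget_tauB 0, stdL_eq_map,
    tauB_map (c := 0) hw (stdRank_strictMonoOn w) fun _ _ =>
      iff_of_true (Nat.zero_le _) (Nat.zero_le _)]

theorem betaL_take (w : List ℕ) (i : ℕ) : betaL (w.take i) = tauB w.headI (w.take i) := by
  cases i with
  | zero => simp [betaL, tauB_nil]
  | succ i => cases w <;> simp [betaL, tauB_nil]

theorem betaBar_single (w : List ℕ) :
    betaBar (Finsupp.single w 1) = Finsupp.single (betaL w) 1 :=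
  Finsupp.mapDomain_single

theorem tauBar_single (w : List ℕ) :
    tauBar (Finsupp.single w 1) = Finsupp.single (tauL w) 1 :=
  Finsupp.mapDomain_single

theorem IsPermList.nodup {w : List ℕ} (hw : IsPermList w) : w.Nodup :=
  hw.nodup_iff.2 List.nodup_range'

theorem rhoM_betaBar_single {w : List ℕ} (hw : w.Nodup) :
    rhoM (betaBar (Finsupp.single w 1)) =
      TensorProduct.map betaBar tauBar (deltaS (Finsupp.single w 1)) := by
  rw [betaBar_single, rhoM_single, betaL, nleaves_tauB, deltaS, Finsupp.lift_apply,
    Finsupp.sum_single_index (by simp), one_smul, map_sum]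
  refine Finset.sum_congr rfl fun i hi => ?_
  rw [TensorProduct.map_tmul, betaBar_single, tauBar_single,
    betaL_stdL (hw.sublist (List.take_sublist i w)),
    tauL_stdL (hw.sublist (List.drop_sublist i w)),
    betaL_take, splitL_tauB w.headI hw (by simpa [Nat.lt_succ_iff] using hi), forget_tauB]

/-- The coaction `ρ(F_b) = ∑_{b → (b_0,b_1)} F_{b_0} ⊗ F_{φ(b_1)}` is
counital and coassociative, making `MSym` a right `YSym`-comodule, and
`ρ ∘ β̄ = (β̄ ⊗ τ̄) ∘ Δ` as maps `SSym → MSym ⊗ YSym`. -/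
theorem MSym_comodule :
    -- counit
    (∀ x : MSym,
      TensorProduct.rid ℚ MSym ((TensorProduct.map LinearMap.id epsY) (rhoM x)) = x) ∧
    -- coassociativity
    (∀ x : MSym,
      TensorProduct.assoc ℚ MSym YSym YSym
          ((TensorProduct.map rhoM LinearMap.id) (rhoM x)) =
        (TensorProduct.map LinearMap.id deltaY) (rhoM x)) ∧
    -- compatibility `ρ ∘ β̄ = (β̄ ⊗ τ̄) ∘ Δ` (on the permutation basis of `SSym`)
    (∀ w : List ℕ, IsPermList w →
      rhoM (betaBar (Finsupp.single w (1 : ℚ))) =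
        TensorProduct.map betaBar tauBar (deltaS (Finsupp.single w (1 : ℚ)))) :=
  ⟨LinearMap.congr_fun rhoM_counit, LinearMap.congr_fun rhoM_coassoc,
    fun _ hw => rhoM_betaBar_single hw.nodup⟩
end
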